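/- arXiv:1108.4705 — 6 statements merged into one kernel-verified Lean document; each statement's English description precedes it below -/
import Mathlib

section
/- Let G be a finite simple graph, u_0, u_1, …, u_k a walk in G, and ℓ : V(G) → ℤ an injective labeling. Then the associated path drawing P(G, u, ℓ) is a valid orthogonal path drawing with 2k+2 points, in which every even-indexed segment is horizontal of unit length and every odd-indexed segment is vertical. -/
/-- A point `q` lies on the axis-parallel closed segment with endpoints `a` and `b`.
(For segments parallel to a coordinate axis, the segment coincides with the bounding box.) -/
def OnSeg (a b q : ℤ × ℤ) : Prop :=
  min a.1 b.1 ≤ q.1 ∧ q.1 ≤ max a.1 b.1 ∧ min a.2 b.2 ≤ q.2 ∧ q.2 ≤ max a.2 b.2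

/-- `p` is an orthogonal path drawing with `n` segments: each consecutive pair of points
differs in exactly one coordinate.  The `i`-th segment joins `p i.castSucc` and `p i.succ`;
it is vertical when the `x`-coordinates agree and horizontal when the `y`-coordinates agree. -/
def IsOrthoDrawing (n : ℕ) (p : Fin (n + 1) → ℤ × ℤ) : Prop :=
  ∀ i : Fin n,
    ((p i.castSucc).1 = (p i.succ).1 ∧ (p i.castSucc).2 ≠ (p i.succ).2) ∨
    ((p i.castSucc).2 = (p i.succ).2 ∧ (p i.castSucc).1 ≠ (p i.succ).1)

/-- Validity of an orthogonal path drawing: (i) the points are pairwise distinct;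
(ii) a point `p j` lies on segment `s i` only when `j = i` or `j = i + 1`;
(iii) two distinct segments intersect in at most one point. -/
def IsValidDrawing (n : ℕ) (p : Fin (n + 1) → ℤ × ℤ) : Prop :=
  IsOrthoDrawing n p ∧
  Function.Injective p ∧
  (∀ (i : Fin n) (j : Fin (n + 1)),
     OnSeg (p i.castSucc) (p i.succ) (p j) → j = i.castSucc ∨ j = i.succ) ∧
  (∀ i j : Fin n, i ≠ j → ∀ q r : ℤ × ℤ,
     OnSeg (p i.castSucc) (p i.succ) q → OnSeg (p j.castSucc) (p j.succ) q →
     OnSeg (p i.castSucc) (p i.succ) r → OnSeg (p j.castSucc) (p j.succ) r → q = r)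

/-- The number of rows of a drawing: the number of distinct `y`-coordinates. -/
def numRows (n : ℕ) (p : Fin (n + 1) → ℤ × ℤ) : ℕ :=
  (Finset.univ.image fun i => (p i).2).card

/-- `q` is a row-by-row compaction of `p`: a valid drawing with the same `x`-coordinates,
in which points sharing a `y`-coordinate in `p` still share a `y`-coordinate. -/
def IsCompaction (n : ℕ) (p q : Fin (n + 1) → ℤ × ℤ) : Prop :=
  IsValidDrawing n q ∧
  (∀ i, (q i).1 = (p i).1) ∧
  (∀ i j, (p i).2 = (p j).2 → (q i).2 = (q j).2)

/-- The path drawing `P(G, u, ℓ)` associated with a walk `u_0, …, u_k` and a vertex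
labeling `ℓ`: the `2k + 2` points `p_{2i} = (i, ℓ (u i))` and `p_{2i+1} = (i + 1, ℓ (u i))`. -/
def pathDrawing {V : Type*} (k : ℕ) (u : Fin (k + 1) → V) (ℓ : V → ℤ) :
    Fin (2 * k + 1 + 1) → ℤ × ℤ :=
  fun j => (((j : ℕ) + 1) / 2, ℓ (u ⟨(j : ℕ) / 2, by omega⟩))

set_option maxHeartbeats 4000000 in
/-- The path drawing `P(G, u, ℓ)` associated with a walk in `G` and an injective labeling
`ℓ` is a valid orthogonal path drawing with `2k + 2` points in which every even-indexed
segment is horizontal of unit length and every odd-indexed segment is vertical. -/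
theorem pathDrawing_isValid {V : Type*} [Fintype V] (G : SimpleGraph V) (k : ℕ)
    (u : Fin (k + 1) → V) (hu : ∀ i : Fin k, G.Adj (u i.castSucc) (u i.succ))
    (ℓ : V → ℤ) (hℓ : Function.Injective ℓ) :
    IsValidDrawing (2 * k + 1) (pathDrawing k u ℓ) ∧
    (∀ i : Fin (2 * k + 1), (i : ℕ) % 2 = 0 →
      (pathDrawing k u ℓ i.castSucc).2 = (pathDrawing k u ℓ i.succ).2 ∧
      (pathDrawing k u ℓ i.succ).1 = (pathDrawing k u ℓ i.castSucc).1 + 1) ∧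
    (∀ i : Fin (2 * k + 1), (i : ℕ) % 2 = 1 →
      (pathDrawing k u ℓ i.castSucc).1 = (pathDrawing k u ℓ i.succ).1) := by
  have hune : ∀ a b : ℕ, ∀ ha : a < k + 1, ∀ hb : b < k + 1,
      (b = a + 1 ∨ a = b + 1) → u ⟨a, ha⟩ ≠ u ⟨b, hb⟩ := by
    intro a b ha hb hab
    rcases hab with h | h
    · subst h
      have := (hu ⟨a, by omega⟩).ne
      simpa [Fin.castSucc, Fin.succ, Fin.ext_iff, Fin.castAdd, Fin.castLE] using this
    · subst h
      have := (hu ⟨b, by omega⟩).ne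
      intro he
      exact this (by simpa [Fin.castSucc, Fin.succ, Fin.ext_iff, Fin.castAdd, Fin.castLE]
        using he.symm)
  have key : ∀ a b : Fin (2 * k + 1 + 1), (a : ℕ) / 2 = (b : ℕ) / 2 →
      (pathDrawing k u ℓ a).2 = (pathDrawing k u ℓ b).2 := by
    intro a b h
    show ℓ (u ⟨(a : ℕ) / 2, by omega⟩) = ℓ (u ⟨(b : ℕ) / 2, by omega⟩)
    exact congrArg (fun t => ℓ (u t)) (Fin.ext h)
  have hy2 : ∀ a : Fin (2 * k + 1 + 1),
      (pathDrawing k u ℓ a).2 = ℓ (u ⟨(a : ℕ) / 2, by omega⟩) := fun a => rfl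
  have hy1 : ∀ a : Fin (2 * k + 1 + 1),
      (pathDrawing k u ℓ a).1 = ((((a : ℕ) + 1) / 2 : ℕ) : ℤ) := fun a => rfl
  refine ⟨⟨?_, ?_, ?_, ?_⟩, ?_, ?_⟩
  · -- orthogonal
    intro i
    rcases Nat.even_or_odd (i : ℕ) with he | ho
    · right
      constructor
      · exact key _ _ (by obtain ⟨m, hm⟩ := he; simp [Fin.coe_castSucc, Fin.val_succ]; omega)
      · rw [hy1, hy1]
        simp only [Fin.coe_castSucc, Fin.val_succ]
        obtain ⟨m, hm⟩ := he
        intro h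
        rw [Nat.cast_inj] at h
        omega
    · left
      constructor
      · rw [hy1, hy1]
        simp only [Fin.coe_castSucc, Fin.val_succ]
        obtain ⟨m, hm⟩ := ho
        congr 1
        omega
      · rw [hy2, hy2]
        simp only [Fin.coe_castSucc, Fin.val_succ]
        intro h
        obtain ⟨m, hm⟩ := ho
        exact hune ((i : ℕ) / 2) (((i : ℕ) + 1) / 2) (by omega) (by omega)
          (by omega) (hℓ h)
  · -- injective
    intro a b h
    have h1 : ((a : ℕ) + 1) / 2 = ((b : ℕ) + 1) / 2 := by
      have := congrArg Prod.fst h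
      rw [hy1, hy1] at this
      exact_mod_cast this
    have h2 : u ⟨(a : ℕ) / 2, by omega⟩ = u ⟨(b : ℕ) / 2, by omega⟩ := by
      have := congrArg Prod.snd h
      rw [hy2, hy2] at this
      exact hℓ this
    by_contra hne
    have hab : (a : ℕ) ≠ (b : ℕ) := fun hh => hne (Fin.ext hh)
    exact hune ((a : ℕ) / 2) ((b : ℕ) / 2) (by omega) (by omega) (by omega) h2
  · -- condition (ii)
    intro i j hseg
    obtain ⟨hx1, hx2, hyl, hyr⟩ := hseg
    rw [hy1, hy1, hy1] at hx1 hx2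
    rw [hy2, hy2, hy2] at hyl hyr
    simp only [Fin.coe_castSucc, Fin.val_succ] at hx1 hx2 hyl hyr
    rcases Nat.even_or_odd (i : ℕ) with he | ho
    · -- horizontal segment
      obtain ⟨m, hm⟩ := he
      have hdiv : ((i : ℕ) + 1) / 2 = (i : ℕ) / 2 := by omega
      have hfin : (⟨((i : ℕ) + 1) / 2, by omega⟩ : Fin (k + 1)) =
          ⟨(i : ℕ) / 2, by omega⟩ := Fin.ext hdiv
      rw [hfin] at hyl hyr
      rw [min_self] at hyl
      rw [max_self] at hyr
      have huj : u ⟨(j : ℕ) / 2, by omega⟩ = u ⟨(i : ℕ) / 2, by omega⟩ :=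
        hℓ (le_antisymm hyr hyl)
      have hjd : (j : ℕ) / 2 = (i : ℕ) / 2 := by
        by_contra hne
        exact hune ((j : ℕ) / 2) ((i : ℕ) / 2) (by omega) (by omega) (by omega) huj
      rcases (show (j : ℕ) = (i : ℕ) ∨ (j : ℕ) = (i : ℕ) + 1 by omega) with h | h
      · exact Or.inl (Fin.ext (by simpa using h))
      · exact Or.inr (Fin.ext (by simpa using h))
    · obtain ⟨m, hm⟩ := ho
      rcases (show (j : ℕ) = (i : ℕ) ∨ (j : ℕ) = (i : ℕ) + 1 by omega) with h | h
      · exact Or.inl (Fin.ext (by simpa using h))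
      · exact Or.inr (Fin.ext (by simpa using h))
  · -- condition (iii)
    intro i j hij q r hqi hqj hri hrj
    have hijn : (i : ℕ) ≠ (j : ℕ) := fun hh => hij (Fin.ext hh)
    obtain ⟨hqi1, hqi2, hqi3, hqi4⟩ := hqi
    obtain ⟨hqj1, hqj2, hqj3, hqj4⟩ := hqj
    obtain ⟨hri1, hri2, hri3, hri4⟩ := hri
    obtain ⟨hrj1, hrj2, hrj3, hrj4⟩ := hrj
    rw [hy1, hy1] at hqi1 hqi2 hqj1 hqj2 hri1 hri2 hrj1 hrj2
    rw [hy2, hy2] at hqi3 hqi4 hqj3 hqj4 hri3 hri4 hrj3 hrj4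
    simp only [Fin.coe_castSucc, Fin.val_succ] at hqi1 hqi2 hqi3 hqi4 hqj1 hqj2 hqj3 hqj4 hri1 hri2 hri3 hri4 hrj1 hrj2 hrj3 hrj4
    rcases Nat.even_or_odd (i : ℕ) with hei | hoi <;>
      rcases Nat.even_or_odd (j : ℕ) with hej | hoj
    · -- both horizontal: derive contradiction
      exfalso
      obtain ⟨m, hm⟩ := hei
      obtain ⟨m', hm'⟩ := hej
      have hdi : (⟨((i : ℕ) + 1) / 2, by omega⟩ : Fin (k + 1)) =
          ⟨(i : ℕ) / 2, by omega⟩ :=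
        Fin.ext (show ((i : ℕ) + 1) / 2 = (i : ℕ) / 2 by omega)
      have hdj : (⟨((j : ℕ) + 1) / 2, by omega⟩ : Fin (k + 1)) =
          ⟨(j : ℕ) / 2, by omega⟩ :=
        Fin.ext (show ((j : ℕ) + 1) / 2 = (j : ℕ) / 2 by omega)
      rw [hdi] at hqi3 hqi4
      rw [min_self] at hqi3
      rw [max_self] at hqi4
      rw [hdj] at hqj3 hqj4
      rw [min_self] at hqj3
      rw [max_self] at hqj4
      have huij : u ⟨(i : ℕ) / 2, by omega⟩ = u ⟨(j : ℕ) / 2, by omega⟩ :=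
        hℓ ((le_antisymm hqi4 hqi3).symm.trans (le_antisymm hqj4 hqj3))
      have hn1 : (j : ℕ) / 2 ≠ (i : ℕ) / 2 + 1 := fun h =>
        hune _ _ (by omega) (by omega) (Or.inl h) huij
      have hn2 : (i : ℕ) / 2 ≠ (j : ℕ) / 2 + 1 := fun h =>
        hune _ _ (by omega) (by omega) (Or.inr h) huij
      omega
    · -- i horizontal, j vertical
      obtain ⟨m, hm⟩ := hei
      obtain ⟨m', hm'⟩ := hoj
      have hdi : (⟨((i : ℕ) + 1) / 2, by omega⟩ : Fin (k + 1)) =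
          ⟨(i : ℕ) / 2, by omega⟩ :=
        Fin.ext (show ((i : ℕ) + 1) / 2 = (i : ℕ) / 2 by omega)
      rw [hdi] at hqi3 hqi4 hri3 hri4
      rw [min_self] at hqi3 hri3
      rw [max_self] at hqi4 hri4
      have h2 : q.2 = r.2 := (le_antisymm hqi4 hqi3).trans (le_antisymm hri4 hri3).symm
      have h1 : q.1 = r.1 := by omega
      exact Prod.ext h1 h2
    · -- i vertical, j horizontal
      obtain ⟨m, hm⟩ := hoi
      obtain ⟨m', hm'⟩ := hej
      have hdj : (⟨((j : ℕ) + 1) / 2, by omega⟩ : Fin (k + 1)) =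
          ⟨(j : ℕ) / 2, by omega⟩ :=
        Fin.ext (show ((j : ℕ) + 1) / 2 = (j : ℕ) / 2 by omega)
      rw [hdj] at hqj3 hqj4 hrj3 hrj4
      rw [min_self] at hqj3 hrj3
      rw [max_self] at hqj4 hrj4
      have h2 : q.2 = r.2 := (le_antisymm hqj4 hqj3).trans (le_antisymm hrj4 hrj3).symm
      have h1 : q.1 = r.1 := by omega
      exact Prod.ext h1 h2
    · -- both vertical: contradiction
      exfalso
      obtain ⟨m, hm⟩ := hoi
      obtain ⟨m', hm'⟩ := hoj
      omega
  · -- even segments horizontal with unit length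
    intro i hi
    constructor
    · exact key _ _ (by simp only [Fin.coe_castSucc, Fin.val_succ]; omega)
    · rw [hy1, hy1]
      simp only [Fin.coe_castSucc, Fin.val_succ]
      have : ((i : ℕ) + 1 + 1) / 2 = ((i : ℕ) + 1) / 2 + 1 := by omega
      rw [this]
      push_cast
      ring
  · -- odd segments vertical
    intro i hi
    rw [hy1, hy1]
    simp only [Fin.coe_castSucc, Fin.val_succ]
    congr 1
    omega
end

section
/- Let G be a finite simple graph, u_0, u_1, …, u_k a walk in G, ℓ : V(G) → ℤ an injective labeling, and c : V(G) → ℤ a proper coloring of G (so c(x) ≠ c(y) whenever x and y are adjacent). Then the sequence q_0, …, q_{2k+1} defined by q_{2i} = (i, c(u_i)) and q_{2i+1} = (i+1, c(u_i)) for 0 ≤ i ≤ k is a valid row-by-row compaction of P(G, u, ℓ), and its number of rows is at most the number of distinct values taken by c. -/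
private lemma master (k : ℕ) (g : ℕ → ℤ) (hg : ∀ m, m < k → g m ≠ g (m + 1)) :
    IsValidDrawing (2 * k + 1)
      (fun j : Fin (2 * k + 1 + 1) => ((((j : ℕ) : ℤ) + 1) / 2, g ((j : ℕ) / 2))) := by
  set P : Fin (2 * k + 1 + 1) → ℤ × ℤ :=
    fun j => ((((j : ℕ) : ℤ) + 1) / 2, g ((j : ℕ) / 2)) with hP
  -- endpoint computations
  have hcs : ∀ i : Fin (2 * k + 1), (i.castSucc : ℕ) = (i : ℕ) := fun i => rfl
  have hsc : ∀ i : Fin (2 * k + 1), (i.succ : ℕ) = (i : ℕ) + 1 := fun i => rfl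
  have hA : ∀ (i : Fin (2 * k + 1)) (m : ℕ), (i : ℕ) = 2 * m →
      P i.castSucc = ((m : ℤ), g m) := by
    intro i m hm
    show ((((i.castSucc : ℕ) : ℤ) + 1) / 2, g ((i.castSucc : ℕ) / 2)) = _
    rw [hcs, hm]
    exact Prod.ext (by push_cast; omega) (congrArg g (by omega))
  have hB : ∀ (i : Fin (2 * k + 1)) (m : ℕ), (i : ℕ) = 2 * m →
      P i.succ = ((m : ℤ) + 1, g m) := by
    intro i m hm
    show ((((i.succ : ℕ) : ℤ) + 1) / 2, g ((i.succ : ℕ) / 2)) = _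
    rw [hsc, hm]
    exact Prod.ext (by push_cast; omega) (congrArg g (by omega))
  have hC : ∀ (i : Fin (2 * k + 1)) (m : ℕ), (i : ℕ) = 2 * m + 1 →
      P i.castSucc = ((m : ℤ) + 1, g m) := by
    intro i m hm
    show ((((i.castSucc : ℕ) : ℤ) + 1) / 2, g ((i.castSucc : ℕ) / 2)) = _
    rw [hcs, hm]
    exact Prod.ext (by push_cast; omega) (congrArg g (by omega))
  have hD : ∀ (i : Fin (2 * k + 1)) (m : ℕ), (i : ℕ) = 2 * m + 1 →
      P i.succ = ((m : ℤ) + 1, g (m + 1)) := by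
    intro i m hm
    show ((((i.succ : ℕ) : ℤ) + 1) / 2, g ((i.succ : ℕ) / 2)) = _
    rw [hsc, hm]
    exact Prod.ext (by push_cast; omega) (congrArg g (by omega))
  refine ⟨?_, ?_, ?_, ?_⟩
  · -- ortho
    intro i
    obtain ⟨m, hm | hm⟩ := Nat.even_or_odd' (i : ℕ)
    · right
      rw [hA i m hm, hB i m hm]
      exact ⟨rfl, by simp⟩
    · left
      have hmk : m < k := by have := i.isLt; omega
      rw [hC i m hm, hD i m hm]
      exact ⟨rfl, hg m hmk⟩
  · -- injective
    intro a b hab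
    have h1 : (((a : ℕ) : ℤ) + 1) / 2 = (((b : ℕ) : ℤ) + 1) / 2 := congrArg Prod.fst hab
    have h2 : g ((a : ℕ) / 2) = g ((b : ℕ) / 2) := congrArg Prod.snd hab
    by_contra hne
    have hne' : (a : ℕ) ≠ (b : ℕ) := fun h => hne (Fin.ext h)
    -- wlog via cases
    have hak := a.isLt
    have hbk := b.isLt
    have key : ((a:ℕ)/2 < k ∧ (a:ℕ) = 2*((a:ℕ)/2)+1 ∧ (b:ℕ) = 2*((a:ℕ)/2)+2) ∨
        ((b:ℕ)/2 < k ∧ (b:ℕ) = 2*((b:ℕ)/2)+1 ∧ (a:ℕ) = 2*((b:ℕ)/2)+2) := by omega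
    rcases key with ⟨hmk, ha, hb⟩ | ⟨hmk, hb, ha⟩
    · apply hg ((a:ℕ)/2) hmk
      rw [show (b:ℕ)/2 = (a:ℕ)/2 + 1 by omega] at h2
      exact h2
    · apply hg ((b:ℕ)/2) hmk
      rw [show (a:ℕ)/2 = (b:ℕ)/2 + 1 by omega] at h2
      exact h2.symm
  · -- on segment implies endpoint
    intro i j hon
    obtain ⟨m, hm | hm⟩ := Nat.even_or_odd' (i : ℕ)
    · rw [hA i m hm, hB i m hm] at hon
      obtain ⟨o1, o2, o3, o4⟩ := hon
      simp only [hP] at o1 o2 o3 o4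
      have hx : (m:ℤ) ≤ (((j:ℕ):ℤ)+1)/2 ∧ (((j:ℕ):ℤ)+1)/2 ≤ (m:ℤ)+1 := by
        constructor <;> omega
      have hy : g ((j:ℕ)/2) = g m := by omega
      have hj : (j:ℕ)+1 = 2*m ∨ (j:ℕ) = 2*m ∨ (j:ℕ) = 2*m+1 ∨ (j:ℕ) = 2*m+2 := by omega
      have hik : (i:ℕ) < 2*k+1 := i.isLt
      rcases hj with hj | hj | hj | hj
      · exfalso
        apply hg ((j:ℕ)/2) (by omega)
        rw [show (j:ℕ)/2 + 1 = m by omega]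
        exact hy
      · left; exact Fin.ext (by rw [hcs]; omega)
      · right; exact Fin.ext (by rw [hsc]; omega)
      · exfalso
        apply hg m (by omega)
        rw [show (j:ℕ)/2 = m + 1 by omega] at hy
        exact hy.symm
    · rw [hC i m hm, hD i m hm] at hon
      obtain ⟨o1, o2, o3, o4⟩ := hon
      simp only [hP] at o1 o2
      have hj : (j:ℕ) = 2*m+1 ∨ (j:ℕ) = 2*m+2 := by omega
      rcases hj with hj | hj
      · left; exact Fin.ext (by rw [hcs]; omega)
      · right; exact Fin.ext (by rw [hsc]; omega)
  · -- crossings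
    intro i j hij q r hiq hjq hir hjr
    have hij' : (i : ℕ) ≠ (j : ℕ) := fun h => hij (Fin.ext h)
    have hik : (i:ℕ) < 2*k+1 := i.isLt
    have hjk : (j:ℕ) < 2*k+1 := j.isLt
    obtain ⟨m, hm | hm⟩ := Nat.even_or_odd' (i : ℕ) <;>
      obtain ⟨m', hm' | hm'⟩ := Nat.even_or_odd' (j : ℕ)
    · -- even, even
      exfalso
      rw [hA i m hm, hB i m hm] at hiq
      rw [hA j m' hm', hB j m' hm'] at hjq
      obtain ⟨a1, a2, a3, a4⟩ := hiq
      obtain ⟨b1, b2, b3, b4⟩ := hjq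
      have hy : g m = g m' := by omega
      have : m' = m + 1 ∨ m = m' + 1 := by omega
      rcases this with h | h
      · exact hg m (by omega) (h ▸ hy)
      · exact hg m' (by omega) (h ▸ hy.symm)
    · -- even, odd
      rw [hA i m hm, hB i m hm] at hiq hir
      rw [hC j m' hm', hD j m' hm'] at hjq hjr
      obtain ⟨a1, a2, a3, a4⟩ := hiq
      obtain ⟨b1, b2, b3, b4⟩ := hjq
      obtain ⟨c1, c2, c3, c4⟩ := hir
      obtain ⟨d1, d2, d3, d4⟩ := hjr
      rw [Prod.ext_iff]
      exact ⟨by omega, by omega⟩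
    · -- odd, even
      rw [hC i m hm, hD i m hm] at hiq hir
      rw [hA j m' hm', hB j m' hm'] at hjq hjr
      obtain ⟨a1, a2, a3, a4⟩ := hiq
      obtain ⟨b1, b2, b3, b4⟩ := hjq
      obtain ⟨c1, c2, c3, c4⟩ := hir
      obtain ⟨d1, d2, d3, d4⟩ := hjr
      rw [Prod.ext_iff]
      exact ⟨by omega, by omega⟩
    · -- odd, odd
      exfalso
      rw [hC i m hm, hD i m hm] at hiq
      rw [hC j m' hm', hD j m' hm'] at hjq
      obtain ⟨a1, a2, a3, a4⟩ := hiq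
      obtain ⟨b1, b2, b3, b4⟩ := hjq
      omega

/-- If `c` is a proper coloring of `G` (by integers), then the drawing obtained from the
path drawing `P(G, u, ℓ)` by replacing the labeling `ℓ` with `c` (i.e. the points
`q_{2i} = (i, c (u i))`, `q_{2i+1} = (i + 1, c (u i))`) is a valid row-by-row compaction of
`P(G, u, ℓ)`, and its number of rows is at most the number of distinct values taken by `c`. -/
theorem coloring_gives_compaction {V : Type*} [Fintype V] [DecidableEq V]
    (G : SimpleGraph V) (k : ℕ)
    (u : Fin (k + 1) → V) (hu : ∀ i : Fin k, G.Adj (u i.castSucc) (u i.succ))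
    (ℓ : V → ℤ) (hℓ : Function.Injective ℓ)
    (c : V → ℤ) (hc : ∀ x y, G.Adj x y → c x ≠ c y) :
    IsCompaction (2 * k + 1) (pathDrawing k u ℓ) (pathDrawing k u c) ∧
    numRows (2 * k + 1) (pathDrawing k u c) ≤ (Finset.univ.image c).card := by
  classical
  let g : ℕ → ℤ := fun m => c (u ⟨m % (k + 1), Nat.mod_lt _ k.succ_pos⟩)
  have hgadj : ∀ m, m < k → g m ≠ g (m + 1) := by
    intro m hmk
    show c (u ⟨m % (k + 1), Nat.mod_lt _ k.succ_pos⟩) ≠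
      c (u ⟨(m + 1) % (k + 1), Nat.mod_lt _ k.succ_pos⟩)
    have e1 : (⟨m % (k + 1), Nat.mod_lt _ k.succ_pos⟩ : Fin (k + 1)) =
        (⟨m, hmk⟩ : Fin k).castSucc := Fin.ext (by
      simp only [Fin.coe_castSucc]
      exact Nat.mod_eq_of_lt (by omega))
    have e2 : (⟨(m + 1) % (k + 1), Nat.mod_lt _ k.succ_pos⟩ : Fin (k + 1)) =
        (⟨m, hmk⟩ : Fin k).succ := Fin.ext (by
      simp only [Fin.val_succ]
      exact Nat.mod_eq_of_lt (by omega))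
    rw [e1, e2]
    exact hc _ _ (hu ⟨m, hmk⟩)
  have hPg : pathDrawing k u c =
      (fun j : Fin (2 * k + 1 + 1) => ((((j : ℕ) : ℤ) + 1) / 2, g ((j : ℕ) / 2))) := by
    funext j
    have hjk := j.isLt
    refine Prod.ext rfl ?_
    show c (u ⟨(j : ℕ) / 2, by omega⟩) = c (u ⟨((j : ℕ) / 2) % (k + 1), Nat.mod_lt _ k.succ_pos⟩)
    exact congrArg c (congrArg u (Fin.ext (Nat.mod_eq_of_lt (by omega)).symm))
  have hvalid : IsValidDrawing (2 * k + 1) (pathDrawing k u c) := by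
    rw [hPg]; exact master k g hgadj
  refine ⟨⟨hvalid, fun i => rfl, ?_⟩, ?_⟩
  · intro i j h
    simp only [pathDrawing] at h ⊢
    exact congrArg c (hℓ h)
  · apply Finset.card_le_card
    intro y hy
    simp only [Finset.mem_image, Finset.mem_univ, true_and] at hy ⊢
    obtain ⟨i, rfl⟩ := hy
    exact ⟨_, rfl⟩
end

section
/- Let G be a finite simple graph, u_0, u_1, …, u_k a walk in G that traverses every edge of G, and ℓ : V(G) → ℤ an injective labeling. If q_0, …, q_{2k+1} is a valid row-by-row compaction of P(G, u, ℓ) with r rows, then G has a proper coloring using at most r colors; in particular χ(G) ≤ r. -/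
/-- If the walk `u_0, …, u_k` traverses every edge of `G` and `q` is a valid row-by-row
compaction of the path drawing `P(G, u, ℓ)` with `r` rows, then `G` has a proper coloring
with at most `r` colors; in particular `χ(G) ≤ r`. -/
theorem compaction_gives_coloring {V : Type*} [Fintype V] (G : SimpleGraph V) (k : ℕ)
    (u : Fin (k + 1) → V) (hu : ∀ i : Fin k, G.Adj (u i.castSucc) (u i.succ))
    (htrav : ∀ e ∈ G.edgeSet, ∃ i : Fin k, e = s(u i.castSucc, u i.succ))
    (ℓ : V → ℤ) (hℓ : Function.Injective ℓ)
    (q : Fin (2 * k + 1 + 1) → ℤ × ℤ)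
    (hq : IsCompaction (2 * k + 1) (pathDrawing k u ℓ) q) :
    G.Colorable (numRows (2 * k + 1) q) ∧
    G.chromaticNumber ≤ (numRows (2 * k + 1) q : ℕ∞) := by
  classical
  obtain ⟨⟨hortho, _, _, _⟩, hx, hy⟩ := hq
  set S : Finset ℤ := Finset.univ.image fun i => (q i).2 with hS
  have hmem : ∀ j, (q j).2 ∈ S := fun j => Finset.mem_image_of_mem _ (Finset.mem_univ j)
  let idx : Fin (k + 1) → Fin (2 * k + 1 + 1) := fun i => ⟨2 * i, by omega⟩
  have hpd : ∀ (j : Fin (2 * k + 1 + 1)) (i : Fin (k + 1)), (j : ℕ) / 2 = (i : ℕ) →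
      (pathDrawing k u ℓ j).2 = ℓ (u i) :=
    fun j i h => congrArg (fun x => ℓ (u x)) (Fin.ext h)
  have hp2 : ∀ i : Fin (k + 1), (pathDrawing k u ℓ (idx i)).2 = ℓ (u i) :=
    fun i => hpd (idx i) i (by show 2 * (i : ℕ) / 2 = (i : ℕ); omega)
  have hA : ∀ i j : Fin (k + 1), ℓ (u i) = ℓ (u j) → (q (idx i)).2 = (q (idx j)).2 := by
    intro i j h
    exact hy _ _ (by rw [hp2, hp2]; exact h)
  have hB : ∀ i : Fin k, (q (idx i.castSucc)).2 ≠ (q (idx i.succ)).2 := by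
    intro i
    have hik : (i : ℕ) < k := i.isLt
    let s : Fin (2 * k + 1) := ⟨2 * i + 1, by omega⟩
    have h1 : (q s.castSucc).1 = (q s.succ).1 := by
      rw [hx, hx]
      show ((2 * (i : ℕ) + 1 + 1) / 2 : ℤ) = ((2 * (i : ℕ) + 1 + 1 + 1) / 2 : ℤ)
      omega
    rcases hortho s with ⟨_, hne⟩ | ⟨_, hne⟩
    · have heq : (q s.castSucc).2 = (q (idx i.castSucc)).2 := by
        apply hy
        rw [hpd s.castSucc ⟨i, by omega⟩ (by show (2 * (i : ℕ) + 1) / 2 = (i : ℕ); omega),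
            hpd (idx i.castSucc) ⟨i, by omega⟩
              (by show 2 * (i : ℕ) / 2 = (i : ℕ); omega)]
      have hsucc : s.succ = idx i.succ :=
        Fin.ext (by show 2 * (i : ℕ) + 1 + 1 = 2 * ((i : ℕ) + 1); omega)
      rw [← heq, ← hsucc]
      exact hne
    · exact absurd h1 hne
  let c : V → ↥S := fun v =>
    if h : ∃ i : Fin (k + 1), u i = v then ⟨(q (idx h.choose)).2, hmem _⟩
    else ⟨(q 0).2, hmem _⟩
  have hc : ∀ i : Fin (k + 1), (c (u i) : ℤ) = (q (idx i)).2 := by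
    intro i
    have h : ∃ j : Fin (k + 1), u j = u i := ⟨i, rfl⟩
    simp only [c, dif_pos h]
    exact hA _ _ (congrArg ℓ h.choose_spec)
  have hproper : ∀ {v w}, G.Adj v w → c v ≠ c w := by
    intro v w hvw
    obtain ⟨i, hi⟩ := htrav s(v, w) (G.mem_edgeSet.mpr hvw)
    rw [Sym2.eq_iff] at hi
    rcases hi with ⟨h1, h2⟩ | ⟨h1, h2⟩
    · subst h1; subst h2
      intro hcon
      exact hB i (by rw [← hc, ← hc]; exact Subtype.ext_iff.mp hcon)
    · subst h1; subst h2
      intro hcon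
      exact hB i (by rw [← hc, ← hc]; exact Subtype.ext_iff.mp hcon.symm)
  have coloring : G.Coloring ↥S := SimpleGraph.Coloring.mk c hproper
  have hcard : Fintype.card ↥S = numRows (2 * k + 1) q := by
    simp [numRows, hS, Fintype.card_coe]
  have hcol : G.Colorable (numRows (2 * k + 1) q) := hcard ▸ coloring.colorable
  exact ⟨hcol, hcol.chromaticNumber_le⟩
end

section
/- For every connected finite simple graph G with m edges, there exists a valid orthogonal path drawing D with at most 4m + 2 points such that D admits a row-by-row compaction with exactly χ(G) rows, and every row-by-row compaction of D has at least χ(G) rows. -/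
/-!
Traverse `G` along a closed walk `u_0, …, u_k` that uses every edge and has length `k ≤ 2m`; it
is grown by splicing a detour `a → b → a` onto an unused edge `ab` at a vertex `a` of the walk.
The staircase drawing of the walk, with the rows labelled injectively by the vertices, has a
vertical segment between the rows of `u_t` and `u_{t+1}` for every `t`. A row-by-row
compaction can only merge rows, so it is the staircase drawing of the same walk under another
vertex labelling `c`; it is valid exactly when `c u_t ≠ c u_{t+1}` for all `t`, i.e. when `c`
is a proper colouring, and its rows are the colours that `c` uses.
-/

open Finset SimpleGraph

lemma onSeg_horizontal {a b y : ℤ} (hab : a ≤ b) (q : ℤ × ℤ) :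
    OnSeg (a, y) (b, y) q ↔ a ≤ q.1 ∧ q.1 ≤ b ∧ q.2 = y := by
  simp only [OnSeg, min_eq_left hab, max_eq_right hab, min_self, max_self]
  omega

lemma onSeg_vertical {x a b : ℤ} (q : ℤ × ℤ) :
    OnSeg (x, a) (x, b) q ↔ q.1 = x ∧ min a b ≤ q.2 ∧ q.2 ≤ max a b := by
  simp only [OnSeg, min_self, max_self]
  omega

section PathDrawing

variable {V : Type*} {k : ℕ} {u : ℕ → V} {ℓ : V → ℤ}

lemma pathDrawing_apply (j : Fin (2 * k + 1 + 1)) :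
    pathDrawing k (fun i => u i) ℓ j = ((((j : ℕ) : ℤ) + 1) / 2, ℓ (u ((j : ℕ) / 2))) :=
  rfl

lemma pathDrawing_segment_cases (i : Fin (2 * k + 1)) :
    (∃ s ≤ k, (i : ℕ) = 2 * s ∧
      pathDrawing k (fun i => u i) ℓ i.castSucc = ((s : ℤ), ℓ (u s)) ∧
      pathDrawing k (fun i => u i) ℓ i.succ = ((s : ℤ) + 1, ℓ (u s))) ∨
    (∃ s < k, (i : ℕ) = 2 * s + 1 ∧
      pathDrawing k (fun i => u i) ℓ i.castSucc = ((s : ℤ) + 1, ℓ (u s)) ∧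
      pathDrawing k (fun i => u i) ℓ i.succ = ((s : ℤ) + 1, ℓ (u (s + 1)))) := by
  have hi := i.isLt
  simp only [pathDrawing_apply, Fin.val_castSucc, Fin.val_succ]
  rcases Nat.even_or_odd' (i : ℕ) with ⟨s, hs | hs⟩ <;> rw [hs]
  · exact .inl ⟨s, by omega, rfl, Prod.ext (by omega) (by rw [show 2 * s / 2 = s by omega]),
      Prod.ext (by omega) (by rw [show (2 * s + 1) / 2 = s by omega])⟩
  · exact .inr ⟨s, by omega, rfl,
      Prod.ext (by omega) (by rw [show (2 * s + 1) / 2 = s by omega]),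
      Prod.ext (by omega) (by rw [show (2 * s + 1 + 1) / 2 = s + 1 by omega])⟩

lemma isOrthoDrawing_pathDrawing_iff :
    IsOrthoDrawing (2 * k + 1) (pathDrawing k (fun i => u i) ℓ) ↔
      ∀ t < k, ℓ (u t) ≠ ℓ (u (t + 1)) := by
  constructor
  · intro h t ht
    obtain ⟨s, -, hs, h1, h2⟩ := (pathDrawing_segment_cases (u := u) (ℓ := ℓ)
      (⟨2 * t + 1, by omega⟩ : Fin (2 * k + 1))).resolve_left
      (by rintro ⟨s, -, hs, -⟩; rw [Fin.val_mk] at hs; omega)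
    obtain rfl : s = t := by rw [Fin.val_mk] at hs; omega
    have := h (⟨2 * s + 1, by omega⟩ : Fin (2 * k + 1))
    rw [h1, h2] at this
    simpa using this
  · intro h i
    rcases pathDrawing_segment_cases (u := u) (ℓ := ℓ) i with
      ⟨s, -, -, h1, h2⟩ | ⟨s, hs, -, h1, h2⟩ <;> rw [h1, h2]
    · exact .inr ⟨rfl, by simp⟩
    · exact .inl ⟨rfl, h s hs⟩

lemma pathDrawing_injective (hℓ : ∀ t < k, ℓ (u t) ≠ ℓ (u (t + 1))) :
    Function.Injective (pathDrawing k (fun i => u i) ℓ) := by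
  intro j j' h
  simp only [pathDrawing_apply, Prod.mk.injEq] at h
  obtain ⟨hx, hy⟩ := h
  by_contra hne
  rw [Fin.ext_iff] at hne
  have := j.isLt; have := j'.isLt
  -- equal columns and distinct indices force `{j, j'} = {2t + 1, 2t + 2}`
  obtain ⟨t, ht, hjt⟩ : ∃ t < k, ((j : ℕ) / 2 = t ∧ (j' : ℕ) / 2 = t + 1) ∨
      ((j' : ℕ) / 2 = t ∧ (j : ℕ) / 2 = t + 1) :=
    ⟨min ((j : ℕ) / 2) ((j' : ℕ) / 2), by omega, by omega⟩
  rcases hjt with ⟨h1, h2⟩ | ⟨h1, h2⟩ <;> rw [h1, h2] at hy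
  exacts [hℓ t ht hy, hℓ t ht hy.symm]

lemma eq_castSucc_or_eq_succ_of_onSeg_pathDrawing (hℓ : ∀ t < k, ℓ (u t) ≠ ℓ (u (t + 1)))
    (i : Fin (2 * k + 1)) (j : Fin (2 * k + 1 + 1))
    (hj : OnSeg (pathDrawing k (fun i => u i) ℓ i.castSucc)
      (pathDrawing k (fun i => u i) ℓ i.succ) (pathDrawing k (fun i => u i) ℓ j)) :
    j = i.castSucc ∨ j = i.succ := by
  have := j.isLt
  simp only [Fin.ext_iff, Fin.val_castSucc, Fin.val_succ]
  rcases pathDrawing_segment_cases (u := u) (ℓ := ℓ) i with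
    ⟨s, hs, hi, h1, h2⟩ | ⟨s, hs, hi, h1, h2⟩ <;>
    rw [h1, h2] at hj <;> rw [hi]
  · rw [onSeg_horizontal (by omega), pathDrawing_apply] at hj
    obtain ⟨hx1, hx2, hy⟩ := hj
    rcases (by omega : (j : ℕ) + 1 = 2 * s ∨ (j : ℕ) = 2 * s ∨ (j : ℕ) = 2 * s + 1 ∨
      (j : ℕ) = 2 * s + 2) with hj | hj | hj | hj
    · obtain ⟨t, rfl⟩ : ∃ t, s = t + 1 := ⟨s - 1, by omega⟩
      rw [show (j : ℕ) / 2 = t by omega] at hy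
      exact absurd hy (hℓ t (by omega))
    · omega
    · omega
    · rw [show (j : ℕ) / 2 = s + 1 by omega] at hy
      exact absurd hy.symm (hℓ s (by omega))
  · rw [onSeg_vertical, pathDrawing_apply] at hj
    omega

lemma eq_of_onSeg_pathDrawing_segments (i i' : Fin (2 * k + 1)) (hii' : i ≠ i') (q r : ℤ × ℤ)
    (hq : OnSeg (pathDrawing k (fun i => u i) ℓ i.castSucc)
      (pathDrawing k (fun i => u i) ℓ i.succ) q)
    (hq' : OnSeg (pathDrawing k (fun i => u i) ℓ i'.castSucc)
      (pathDrawing k (fun i => u i) ℓ i'.succ) q)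
    (hr : OnSeg (pathDrawing k (fun i => u i) ℓ i.castSucc)
      (pathDrawing k (fun i => u i) ℓ i.succ) r)
    (hr' : OnSeg (pathDrawing k (fun i => u i) ℓ i'.castSucc)
      (pathDrawing k (fun i => u i) ℓ i'.succ) r) :
    q = r := by
  rw [Ne, Fin.ext_iff] at hii'
  rcases pathDrawing_segment_cases (u := u) (ℓ := ℓ) i with
    ⟨s, -, hi, h1, h2⟩ | ⟨s, -, hi, h1, h2⟩ <;>
    rw [h1, h2] at hq hr <;>
    rcases pathDrawing_segment_cases (u := u) (ℓ := ℓ) i' with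
      ⟨s', -, hi', h1', h2'⟩ | ⟨s', -, hi', h1', h2'⟩ <;>
    rw [h1', h2'] at hq' hr' <;>
    simp only [onSeg_horizontal (by omega : (s : ℤ) ≤ s + 1),
      onSeg_horizontal (by omega : (s' : ℤ) ≤ s' + 1), onSeg_vertical] at hq hr hq' hr' <;>
    exact Prod.ext (by omega) (by omega)

lemma isValidDrawing_pathDrawing_iff :
    IsValidDrawing (2 * k + 1) (pathDrawing k (fun i => u i) ℓ) ↔
      ∀ t < k, ℓ (u t) ≠ ℓ (u (t + 1)) :=
  ⟨fun h => isOrthoDrawing_pathDrawing_iff.1 h.1, fun h =>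
    ⟨isOrthoDrawing_pathDrawing_iff.2 h, pathDrawing_injective h,
      eq_castSucc_or_eq_succ_of_onSeg_pathDrawing h, eq_of_onSeg_pathDrawing_segments⟩⟩

lemma numRows_pathDrawing [Fintype V] (hu : ∀ v, ∃ t ≤ k, u t = v) :
    numRows (2 * k + 1) (pathDrawing k (fun i => u i) ℓ) = #(univ.image ℓ) := by
  rw [numRows]
  congr 1
  ext z
  simp only [pathDrawing_apply, mem_image, mem_univ, true_and]
  constructor
  · rintro ⟨j, rfl⟩
    exact ⟨_, rfl⟩
  · rintro ⟨v, rfl⟩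
    obtain ⟨t, ht, rfl⟩ := hu v
    exact ⟨⟨2 * t, by omega⟩, by rw [show 2 * t / 2 = t by omega]⟩

end PathDrawing

lemma IsCompaction.exists_eq_rowMap {n : ℕ} {p q : Fin (n + 1) → ℤ × ℤ} (h : IsCompaction n p q) :
    ∃ f : ℤ → ℤ, ∀ j, q j = ((p j).1, f (p j).2) := by
  classical
  refine ⟨fun z => if hz : ∃ i, (p i).2 = z then (q hz.choose).2 else 0, fun j => ?_⟩
  have hj : ∃ i, (p i).2 = (p j).2 := ⟨j, rfl⟩
  simp only [dif_pos hj]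
  exact Prod.ext (h.2.1 j) (h.2.2 _ _ hj.choose_spec.symm)

lemma isCompaction_pathDrawing_iff {V : Type*} {k : ℕ} {u : ℕ → V} {ℓ : V → ℤ}
    (hℓ : Function.Injective ℓ) {q : Fin (2 * k + 1 + 1) → ℤ × ℤ} :
    IsCompaction (2 * k + 1) (pathDrawing k (fun i => u i) ℓ) q ↔
      ∃ c : V → ℤ, q = pathDrawing k (fun i => u i) c ∧ ∀ t < k, c (u t) ≠ c (u (t + 1)) := by
  constructor
  · intro h
    obtain ⟨f, hf⟩ := h.exists_eq_rowMap
    obtain rfl : q = pathDrawing k (fun i => u i) (f ∘ ℓ) := funext hf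
    exact ⟨f ∘ ℓ, rfl, isValidDrawing_pathDrawing_iff.1 h.1⟩
  · rintro ⟨c, rfl, hc⟩
    refine ⟨isValidDrawing_pathDrawing_iff.2 hc, fun _ => rfl, fun i j hij => ?_⟩
    simp only [pathDrawing_apply] at hij ⊢
    rw [hℓ hij]

namespace SimpleGraph

variable {V : Type*} {G : SimpleGraph V}

namespace Walk

lemma exists_adj_mem_support_notMem_edges {v w a x : V} (W : G.Walk v w) (P : G.Walk a x)
    (ha : a ∈ W.support) (hx : x ∉ W.support) :
    ∃ b c, G.Adj b c ∧ b ∈ W.support ∧ s(b, c) ∉ W.edges := by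
  induction P with
  | nil => exact absurd ha hx
  | @cons a y x hay P ih =>
    by_cases hay' : s(a, y) ∈ W.edges
    · exact ih (W.snd_mem_support_of_mem_edges hay') hx
    · exact ⟨a, y, hay, ha, hay'⟩

lemma mem_support_of_forall_mem_edges (hG : G.Preconnected) {v w : V} {W : G.Walk v w}
    (hW : ∀ e ∈ G.edgeSet, e ∈ W.edges) (x : V) : x ∈ W.support := by
  by_contra hx
  obtain ⟨b, c, hbc, -, hbcW⟩ :=
    W.exists_adj_mem_support_notMem_edges (hG v x).some W.start_mem_support hx
  exact hbcW (hW _ hbc)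

lemma exists_walk_length_add_two_edges_insert [DecidableEq V] {w a b : V} (W : G.Walk w w)
    (hab : G.Adj a b) (ha : a ∈ W.support) :
    ∃ W' : G.Walk a a, W'.length = W.length + 2 ∧
      W'.edges.toFinset = insert s(a, b) W.edges.toFinset := by
  refine ⟨cons hab (cons hab.symm (W.rotate a ha)), by simp, ?_⟩
  rw [edges_cons, edges_cons, List.toFinset_cons, List.toFinset_cons, Sym2.eq_swap,
    Finset.insert_idem, List.toFinset_eq_of_perm _ _ (W.rotate_edges a ha).perm]

lemma exists_getVert_of_mem_support {v w x : V} {W : G.Walk v w} (hx : x ∈ W.support) :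
    ∃ t ≤ W.length, W.getVert t = x := by
  obtain ⟨t, ht, htW⟩ := mem_support_iff_exists_getVert.1 hx
  exact ⟨t, htW, ht⟩

lemma forall_getVert_ne_getVert_succ_iff {α : Type*} {v w : V} {W : G.Walk v w}
    (hW : ∀ e ∈ G.edgeSet, e ∈ W.edges) (c : V → α) :
    (∀ t < W.length, c (W.getVert t) ≠ c (W.getVert (t + 1))) ↔ ∀ x y, G.Adj x y → c x ≠ c y := by
  constructor
  · intro h x y hxy
    obtain ⟨t, ht, hte⟩ := List.getElem_of_mem (hW s(x, y) hxy)
    rw [getElem_edges, Sym2.eq_iff] at hte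
    rw [length_edges] at ht
    rcases hte with ⟨rfl, rfl⟩ | ⟨rfl, rfl⟩
    exacts [h t ht, (h t ht).symm]
  · exact fun h t ht => h _ _ (W.adj_getVert_succ ht)

end Walk

theorem Connected.exists_closed_walk_forall_mem_edges [Fintype V] [DecidableEq V]
    [DecidableRel G.Adj] (hG : G.Connected) :
    ∃ (v : V) (W : G.Walk v v), W.length ≤ 2 * #G.edgeFinset ∧ ∀ e ∈ G.edgeSet, e ∈ W.edges := by
  have hsub {v : V} (W : G.Walk v v) : W.edges.toFinset ⊆ G.edgeFinset := fun e he =>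
    mem_edgeFinset.2 (W.edges_subset_edgeSet (List.mem_toFinset.1 he))
  suffices h : ∀ n (v : V) (W : G.Walk v v), #(G.edgeFinset \ W.edges.toFinset) = n →
      W.length ≤ 2 * #W.edges.toFinset →
      ∃ (v : V) (W : G.Walk v v), W.length ≤ 2 * #G.edgeFinset ∧ ∀ e ∈ G.edgeSet, e ∈ W.edges by
    obtain ⟨v⟩ := hG.nonempty
    exact h _ v .nil rfl (by simp)
  intro n
  induction n using Nat.strong_induction_on with
  | _ n ih =>
  intro v W hn hlen
  by_cases hcov : ∀ e ∈ G.edgeSet, e ∈ W.edges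
  · exact ⟨v, W, hlen.trans (by have := card_le_card (hsub W); omega), hcov⟩
  push Not at hcov
  obtain ⟨b, c, hbc, hb, hbcW⟩ : ∃ b c, G.Adj b c ∧ b ∈ W.support ∧ s(b, c) ∉ W.edges := by
    obtain ⟨e, he, heW⟩ := hcov
    induction e using Sym2.ind with
    | _ x y =>
      by_cases hx : x ∈ W.support
      · exact ⟨x, y, he, hx, heW⟩
      · exact W.exists_adj_mem_support_notMem_edges (hG.preconnected v x).some
          W.start_mem_support hx
  obtain ⟨W', hlen', hedges'⟩ := W.exists_walk_length_add_two_edges_insert hbc hb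
  have hbcW' : s(b, c) ∉ W.edges.toFinset := by rwa [List.mem_toFinset]
  refine ih _ ?_ b W' rfl ?_
  · rw [← hn, hedges', sdiff_insert]
    exact card_erase_lt_of_mem (mem_sdiff.2 ⟨mem_edgeFinset.2 hbc, hbcW'⟩)
  · rw [hlen', hedges', card_insert_of_notMem hbcW']
    omega

lemma chromaticNumber_le_card_image [Fintype V] {α : Type*} [DecidableEq α] (c : V → α)
    (hc : ∀ v w, G.Adj v w → c v ≠ c w) : G.chromaticNumber ≤ #(univ.image c) := by
  let C : G.Coloring (univ.image c) :=
    Coloring.mk (fun v => ⟨c v, mem_image_of_mem c (mem_univ v)⟩)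
      fun hvw h => hc _ _ hvw (congrArg Subtype.val h)
  simpa using C.colorable.chromaticNumber_le

lemma exists_card_image_eq_chromaticNumber [Fintype V] :
    ∃ c : V → ℤ, (∀ v w, G.Adj v w → c v ≠ c w) ∧ (#(univ.image c) : ℕ∞) = G.chromaticNumber := by
  obtain ⟨C⟩ := G.colorable_chromaticNumber_of_fintype
  have hC : ∀ v w, G.Adj v w → (C v : ℤ) ≠ C w := fun v w hvw h =>
    C.valid hvw (Fin.ext (by exact_mod_cast h))
  refine ⟨fun v => C v, hC, le_antisymm ?_ (chromaticNumber_le_card_image _ hC)⟩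
  calc (#(univ.image fun v => (C v : ℤ)) : ℕ∞)
      ≤ #(univ.image fun i : Fin G.chromaticNumber.toNat => (i : ℤ)) := by
        gcongr
        intro z hz
        obtain ⟨v, -, rfl⟩ := mem_image.1 hz
        exact mem_image_of_mem _ (mem_univ _)
    _ ≤ G.chromaticNumber.toNat := by exact_mod_cast card_image_le.trans (by simp)
    _ ≤ G.chromaticNumber := ENat.natCast_toNat_le_self _

end SimpleGraph

/-- For every connected finite simple graph `G` with `m` edges there is a valid orthogonal
path drawing `D` with at most `4m + 2` points such that `D` admits a row-by-row compaction
with exactly `χ(G)` rows, and every row-by-row compaction of `D` has at least `χ(G)` rows. -/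
theorem compaction_measures_chromaticNumber {V : Type*} [Fintype V] [DecidableEq V]
    (G : SimpleGraph V) [DecidableRel G.Adj] (hG : G.Connected) :
    ∃ (n : ℕ) (p : Fin (n + 1) → ℤ × ℤ),
      IsValidDrawing n p ∧
      n + 1 ≤ 4 * G.edgeFinset.card + 2 ∧
      (∃ q : Fin (n + 1) → ℤ × ℤ, IsCompaction n p q ∧
        (numRows n q : ℕ∞) = G.chromaticNumber) ∧
      (∀ q : Fin (n + 1) → ℤ × ℤ, IsCompaction n p q →
        G.chromaticNumber ≤ (numRows n q : ℕ∞)) := by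
  obtain ⟨_, W, hlen, hW⟩ := hG.exists_closed_walk_forall_mem_edges
  have hsupp (x : V) : ∃ t ≤ W.length, W.getVert t = x :=
    Walk.exists_getVert_of_mem_support (Walk.mem_support_of_forall_mem_edges hG.preconnected hW x)
  have hproper (c : V → ℤ) := Walk.forall_getVert_ne_getVert_succ_iff hW c
  let ℓ : V → ℤ := fun v => Fintype.equivFin V v
  have hℓ : Function.Injective ℓ :=
    (Nat.cast_injective.comp Fin.val_injective).comp (Fintype.equivFin V).injective
  refine ⟨2 * W.length + 1, pathDrawing W.length (fun i => W.getVert i) ℓ,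
    isValidDrawing_pathDrawing_iff.2 ((hproper ℓ).2 fun v w hvw h => hvw.ne (hℓ h)),
    by omega, ?_, fun q hq => ?_⟩
  · obtain ⟨c, hc, hχ⟩ := G.exists_card_image_eq_chromaticNumber
    exact ⟨_, (isCompaction_pathDrawing_iff hℓ).2 ⟨c, rfl, (hproper c).2 hc⟩,
      by rw [numRows_pathDrawing hsupp, hχ]⟩
  · obtain ⟨c, rfl, hc⟩ := (isCompaction_pathDrawing_iff hℓ).1 hq
    rw [numRows_pathDrawing hsupp]
    exact G.chromaticNumber_le_card_image c ((hproper c).1 hc)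
end

section
/- Let n ≥ 1 and let d : {1, …, n} → {H, V} be any assignment of axis labels to segment indices. Let k be defined by: k − 1 is the maximum number of consecutive indices on which d takes the value V, with k = 1 if d never takes the value V. Then there exists a valid orthogonal path drawing p_0, …, p_n such that for every i, segment s_i is vertical if d(i) = V and horizontal if d(i) = H, and whose number of rows is exactly k. -/
namespace DrawAux

def scnt (n : ℕ) (v : ℕ → Bool) (j : ℕ) : ℕ :=
  if h : j < n ∧ v j = true then scnt n v (j+1) + 1 else 0
termination_by n - j
decreasing_by omega

def xc (v : ℕ → Bool) : ℕ → ℤ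
  | 0 => 0
  | j+1 => xc v j + (if v j then 0 else 1)

def yc (n k : ℕ) (v : ℕ → Bool) : ℕ → ℤ × Bool
  | 0 => (0, true)
  | j+1 =>
    let c := yc n k v j
    if v j then
      ((if c.2 then (k:ℤ) - 1 - (scnt n v (j+1) : ℤ) else (scnt n v (j+1) : ℤ)), c.2)
    else
      (c.1, if 0 < j ∧ v (j-1) = true then !c.2 else c.2)

variable (n k : ℕ) (v : ℕ → Bool)

lemma scnt_pos (j : ℕ) (h1 : j < n) (h2 : v j = true) :
    scnt n v j = scnt n v (j+1) + 1 := by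
  rw [scnt]; simp [h1, h2]

lemma scnt_zero (j : ℕ) (h : ¬ (j < n ∧ v j = true)) : scnt n v j = 0 := by
  rw [scnt]; simp only [dif_neg h]

lemma scnt_add_le (j : ℕ) (hj : j ≤ n) : j + scnt n v j ≤ n := by
  by_cases h : j < n ∧ v j = true
  · rw [scnt_pos n v j h.1 h.2]
    have := scnt_add_le (j+1) h.1
    omega
  · rw [scnt_zero n v j h]; omega
termination_by n - j
decreasing_by omega

lemma scnt_true (j : ℕ) : ∀ m, m < scnt n v j → v (j + m) = true := by
  intro m hm
  by_cases h : j < n ∧ v j = true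
  · match m with
    | 0 => simpa using h.2
    | m+1 =>
      rw [scnt_pos n v j h.1 h.2] at hm
      have := scnt_true (j+1) m (by omega)
      have e : j + (m+1) = (j+1) + m := by omega
      rwa [e]
  · rw [scnt_zero n v j h] at hm; omega
termination_by n - j
decreasing_by omega

lemma yc_run (j : ℕ) (hvj : v j = true) :
    yc n k v (j+1) =
      ((if (yc n k v j).2 then (k:ℤ) - 1 - (scnt n v (j+1) : ℤ) else (scnt n v (j+1) : ℤ)),
        (yc n k v j).2) := by
  rw [yc]; simp [hvj]

lemma yc_flat (j : ℕ) (hvj : v j = false) :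
    yc n k v (j+1) =
      ((yc n k v j).1, if 0 < j ∧ v (j-1) = true then !(yc n k v j).2 else (yc n k v j).2) := by
  rw [yc]; simp [hvj]

/-- inside or at the end of a run, the y-coordinate is given by the formula. -/
lemma yc_inside (j : ℕ) (hj0 : 0 < j) (hvj1 : v (j-1) = true) :
    (yc n k v j).1 =
      (if (yc n k v j).2 then (k:ℤ) - 1 - (scnt n v j : ℤ) else (scnt n v j : ℤ)) := by
  have hj1 : j - 1 + 1 = j := by omega
  have h1 := yc_run n k v (j-1) hvj1
  rw [hj1] at h1
  rw [h1]

variable (hk1 : 1 ≤ k) (hs : ∀ j, scnt n v j ≤ k - 1) (hv : ∀ j, v j = true → j < n)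

include hk1 hs hv

/-- at a run boundary the point is at an extreme, with direction pointing inward. -/
lemma boundary : ∀ j, (j = 0 ∨ v (j-1) = false) →
    ((yc n k v j).1 = 0 ∧ (yc n k v j).2 = true) ∨
    ((yc n k v j).1 = (k:ℤ) - 1 ∧ (yc n k v j).2 = false) := by
  intro j hj
  induction j with
  | zero => left; simp [yc]
  | succ j ih =>
    have hvj : v j = false := by simpa using hj
    rw [yc_flat n k v j hvj]
    by_cases hrun : 0 < j ∧ v (j-1) = true
    · -- a run just ended at point j
      obtain ⟨hj0, hvj1⟩ := hrun
      have hy := yc_inside n k v j hj0 hvj1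
      have hsz : scnt n v j = 0 := scnt_zero n v j (by simp [hvj])
      rw [hsz] at hy
      rcases hb : (yc n k v j).2 with _ | _
      · rw [hb] at hy
        norm_num at hy
        left
        simp [hj0, hvj1, hy, hb]
      · rw [hb] at hy
        norm_num at hy
        right
        simp only [hj0, hvj1, and_self, if_true, hb]
        exact ⟨hy, rfl⟩
    · have hj' : j = 0 ∨ v (j-1) = false := by
        rcases Nat.eq_zero_or_pos j with h | h
        · exact Or.inl h
        · right
          by_contra hc
          exact hrun ⟨h, by simpa using hc⟩
      rcases ih hj' with ⟨h1, h2⟩ | ⟨h1, h2⟩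
      · left; simp [hrun, h1, h2]
      · right; simp [hrun, h1, h2]

/-- one vertical step: direction preserved, strictly monotone accordingly. -/
lemma step (j : ℕ) (hvj : v j = true) :
    (yc n k v (j+1)).2 = (yc n k v j).2 ∧
    ((yc n k v j).2 = true → (yc n k v j).1 < (yc n k v (j+1)).1) ∧
    ((yc n k v j).2 = false → (yc n k v (j+1)).1 < (yc n k v j).1) := by
  have hjn : j < n := hv j hvj
  have hsj : scnt n v j = scnt n v (j+1) + 1 := scnt_pos n v j hjn hvj
  have hsjk := hs j
  have hrw := yc_run n k v j hvj
  have hy1 : (yc n k v (j+1)).1 =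
      (if (yc n k v j).2 then (k:ℤ) - 1 - (scnt n v (j+1) : ℤ) else (scnt n v (j+1) : ℤ)) := by
    rw [hrw]
  refine ⟨by rw [hrw], ?_, ?_⟩
  all_goals intro hu
  all_goals rw [hy1]
  all_goals simp only [hu, if_true, if_false, Bool.false_eq_true]
  all_goals by_cases hb : j = 0 ∨ v (j-1) = false
  · rcases boundary n k v hk1 hs hv j hb with ⟨h1, h2⟩ | ⟨h1, h2⟩
    · rw [h1]
      have hk2' : 2 ≤ k := by omega
      have : (scnt n v (j+1) : ℤ) ≤ (k:ℤ) - 2 := by push_cast; omega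
      omega
    · rw [hu] at h2; exact absurd h2 (by simp)
  · have hvj1 : v (j-1) = true := by
      rcases hb' : v (j-1) with _ | _
      · exact absurd (Or.inr hb') hb
      · rfl
    have hj0 : 0 < j := by
      rcases Nat.eq_zero_or_pos j with h | h
      · exact absurd (Or.inl h) hb
      · exact h
    rw [yc_inside n k v j hj0 hvj1]
    simp only [hu, if_true]
    push_cast
    omega
  · rcases boundary n k v hk1 hs hv j hb with ⟨h1, h2⟩ | ⟨h1, h2⟩
    · rw [hu] at h2; exact absurd h2 (by simp)
    · rw [h1]
      have hk2' : 2 ≤ k := by omega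
      have : (scnt n v (j+1) : ℤ) ≤ (k:ℤ) - 2 := by push_cast; omega
      omega
  · have hvj1 : v (j-1) = true := by
      rcases hb' : v (j-1) with _ | _
      · exact absurd (Or.inr hb') hb
      · rfl
    have hj0 : 0 < j := by
      rcases Nat.eq_zero_or_pos j with h | h
      · exact absurd (Or.inl h) hb
      · exact h
    rw [yc_inside n k v j hj0 hvj1]
    simp only [hu, if_false, Bool.false_eq_true]
    push_cast
    omega

/-- y-coordinates stay in `[0, k-1]`. -/
lemma bounds : ∀ j, 0 ≤ (yc n k v j).1 ∧ (yc n k v j).1 ≤ (k:ℤ) - 1 := by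
  intro j
  induction j with
  | zero => simp [yc]; omega
  | succ j ih =>
    rcases hvj : v j with _ | _
    · rw [yc_flat n k v j hvj]; exact ih
    · have h := yc_run n k v j hvj
      have hy1 : (yc n k v (j+1)).1 =
          (if (yc n k v j).2 then (k:ℤ) - 1 - (scnt n v (j+1) : ℤ) else (scnt n v (j+1) : ℤ)) := by
        rw [h]
      rw [hy1]
      have h1 := hs (j+1)
      have : (scnt n v (j+1) : ℤ) ≤ (k:ℤ) - 1 := by push_cast; omega
      rcases (yc n k v j).2 with _ | _ <;> simp <;> omega

end DrawAux

namespace DrawAux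
namespace More

variable (n k : ℕ) (v : ℕ → Bool)
variable (hk1 : 1 ≤ k) (hs : ∀ j, scnt n v j ≤ k - 1) (hv : ∀ j, v j = true → j < n)

include hk1 hs hv

/-- monotonicity along a column (maximal vertical run). -/
lemma col (i : ℕ) : ∀ j, i ≤ j → (∀ m, i ≤ m → m < j → v m = true) →
    (yc n k v j).2 = (yc n k v i).2 ∧
    ((yc n k v i).2 = true →
      ((yc n k v i).1 ≤ (yc n k v j).1 ∧ (i < j → (yc n k v i).1 < (yc n k v j).1))) ∧
    ((yc n k v i).2 = false →
      ((yc n k v j).1 ≤ (yc n k v i).1 ∧ (i < j → (yc n k v j).1 < (yc n k v i).1))) := by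
  intro j
  induction j with
  | zero =>
    intro hij _
    have : i = 0 := by omega
    subst this
    exact ⟨rfl, fun _ => ⟨le_refl _, by omega⟩, fun _ => ⟨le_refl _, by omega⟩⟩
  | succ j ih =>
    intro hij hcol
    rcases Nat.lt_or_ge i (j+1) with hlt | hge
    · have hij' : i ≤ j := by omega
      have hcol' : ∀ m, i ≤ m → m < j → v m = true := fun m h1 h2 => hcol m h1 (by omega)
      have hvj : v j = true := hcol j hij' (by omega)
      obtain ⟨ihu, ihT, ihF⟩ := ih hij' hcol'
      obtain ⟨su, sT, sF⟩ := step n k v hk1 hs hv j hvj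
      refine ⟨by rw [su, ihu], ?_, ?_⟩
      · intro hu
        have h1 := (ihT hu).1
        have h2 := sT (by rw [ihu]; exact hu)
        exact ⟨by omega, fun _ => by omega⟩
      · intro hu
        have h1 := (ihF hu).1
        have h2 := sF (by rw [ihu]; exact hu)
        exact ⟨by omega, fun _ => by omega⟩
    · have : i = j + 1 := by omega
      subst this
      exact ⟨rfl, fun _ => ⟨le_refl _, by omega⟩, fun _ => ⟨le_refl _, by omega⟩⟩

omit hk1 hs hv

lemma xc_succ (j : ℕ) : xc v j ≤ xc v (j+1) ∧ xc v (j+1) ≤ xc v j + 1 := by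
  rcases h : v j with _ | _ <;> simp [xc, h]

lemma xc_mono (i : ℕ) : ∀ j, i ≤ j → xc v i ≤ xc v j := by
  intro j
  induction j with
  | zero =>
    intro h
    have : i = 0 := by omega
    subst this
    exact le_refl _
  | succ j ih =>
    intro h
    rcases Nat.lt_or_ge i (j+1) with hlt | hge
    · have := ih (by omega)
      have := (xc_succ v j).1
      omega
    · have : i = j + 1 := by omega
      subst this; exact le_refl _

lemma xc_step_V (j : ℕ) (h : v j = true) : xc v (j+1) = xc v j := by
  simp [xc, h]

lemma xc_step_H (j : ℕ) (h : v j = false) : xc v (j+1) = xc v j + 1 := by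
  simp [xc, h]

lemma xc_col (i j : ℕ) (hij : i ≤ j) (hx : xc v i = xc v j) :
    ∀ m, i ≤ m → m < j → v m = true := by
  intro m h1 h2
  by_contra hc
  have hvm : v m = false := by
    rcases hm : v m with _ | _
    · rfl
    · exact absurd hm hc
  have e1 : xc v i ≤ xc v m := xc_mono v i m h1
  have e2 : xc v (m+1) = xc v m + 1 := xc_step_H v m hvm
  have e3 : xc v (m+1) ≤ xc v j := xc_mono v (m+1) j (by omega)
  omega

include hk1 hs hv

/-- points are injective. -/
lemma pt_inj (i j : ℕ) (hx : xc v i = xc v j) (hy : (yc n k v i).1 = (yc n k v j).1) :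
    i = j := by
  rcases lt_trichotomy i j with h | h | h
  · exfalso
    have hcol := xc_col v i j (by omega) hx
    obtain ⟨_, hT, hF⟩ := col n k v hk1 hs hv i j (by omega) hcol
    rcases hu : (yc n k v i).2 with _ | _
    · have := (hF hu).2 h; omega
    · have := (hT hu).2 h; omega
  · exact h
  · exfalso
    have hcol := xc_col v j i (by omega) hx.symm
    obtain ⟨_, hT, hF⟩ := col n k v hk1 hs hv j i (by omega) hcol
    rcases hu : (yc n k v j).2 with _ | _
    · have := (hF hu).2 h; omega
    · have := (hT hu).2 h; omega

end More
end DrawAux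


open DrawAux DrawAux.More in
/-- Let `d : Fin n → Bool` (`true` = vertical `V`, `false` = horizontal `H`) with `n ≥ 1`,
and let `k ≥ 1` be such that `k - 1` is the maximum number of consecutive indices on which
`d` takes the value `V` (so `k = 1` when `d` never takes the value `V`).  Then there is a
valid orthogonal path drawing whose `i`-th segment is vertical exactly when `d i = true`
and whose number of rows is exactly `k`. -/
theorem exists_drawing_with_min_rows (n : ℕ) (hn : 1 ≤ n) (d : Fin n → Bool)
    (k : ℕ) (hk1 : 1 ≤ k)
    (hk2 : ∀ (a len : ℕ) (h : a + len ≤ n),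
      (∀ j (hj : j < len), d ⟨a + j, by omega⟩ = true) → len ≤ k - 1)
    (hk3 : ∃ (a : ℕ) (h : a + (k - 1) ≤ n),
      ∀ j (hj : j < k - 1), d ⟨a + j, by omega⟩ = true) :
    ∃ p : Fin (n + 1) → ℤ × ℤ, IsValidDrawing n p ∧
      (∀ i : Fin n, ((p i.castSucc).1 = (p i.succ).1 ↔ d i = true)) ∧
      numRows n p = k := by
  classical
  set v : ℕ → Bool := fun i => if h : i < n then d ⟨i, h⟩ else false with hvdef
  have hv : ∀ j, v j = true → j < n := by
    intro j h
    by_contra hc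
    simp [hvdef, hc] at h
  have hvd : ∀ (j : ℕ) (h : j < n), v j = d ⟨j, h⟩ := by
    intro j h
    simp [hvdef, h]
  have hvd' : ∀ i : Fin n, v (i : ℕ) = d i := by
    intro i
    rw [hvd (i : ℕ) i.isLt]
  have hs : ∀ j, scnt n v j ≤ k - 1 := by
    intro j
    rcases Nat.lt_or_ge j n with h | h
    · refine hk2 j (scnt n v j) (scnt_add_le n v j (le_of_lt h)) ?_
      intro m hm
      have := scnt_true n v j m hm
      rwa [hvd (j + m) (by have := scnt_add_le n v j (le_of_lt h); omega)] at this
    · have : scnt n v j = 0 := scnt_zero n v j (by omega)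
      omega
  refine ⟨fun j => (xc v (j : ℕ), (yc n k v (j : ℕ)).1), ⟨?_, ?_, ?_, ?_⟩, ?_, ?_⟩
  · -- IsOrthoDrawing
    intro i
    simp only [Fin.coe_castSucc, Fin.val_succ]
    rcases hvI : v (i : ℕ) with _ | _
    · right
      refine ⟨by rw [yc_flat n k v (i : ℕ) hvI], ?_⟩
      rw [xc_step_H v (i : ℕ) hvI]
      omega
    · left
      refine ⟨(xc_step_V v (i : ℕ) hvI).symm, ?_⟩
      obtain ⟨su, sT, sF⟩ := step n k v hk1 hs hv (i : ℕ) hvI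
      rcases hu : (yc n k v (i : ℕ)).2 with _ | _
      · have := sF hu; omega
      · have := sT hu; omega
  · -- Injective
    intro a b hab
    simp only [Prod.mk.injEq] at hab
    exact Fin.ext (pt_inj n k v hk1 hs hv (a : ℕ) (b : ℕ) hab.1 hab.2)
  · -- condition (ii)
    intro i j hOn
    simp only [OnSeg, Fin.coe_castSucc, Fin.val_succ] at hOn
    obtain ⟨hx1, hx2, hy1, hy2⟩ := hOn
    have hIn : (i : ℕ) < n := i.isLt
    rcases hvI : v (i : ℕ) with _ | _
    · -- horizontal segment
      have hxs := xc_step_H v (i : ℕ) hvI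
      have hys : (yc n k v ((i : ℕ)+1)).1 = (yc n k v (i : ℕ)).1 := by
        rw [yc_flat n k v (i : ℕ) hvI]
      rw [hxs] at hx1 hx2
      rw [hys] at hy1 hy2
      have hyJ : (yc n k v (j : ℕ)).1 = (yc n k v (i : ℕ)).1 := by omega
      have hxJ : xc v (j : ℕ) = xc v (i : ℕ) ∨ xc v (j : ℕ) = xc v (i : ℕ) + 1 := by omega
      rcases hxJ with h | h
      · left
        apply Fin.ext
        simpa using pt_inj n k v hk1 hs hv (j : ℕ) (i : ℕ) h hyJ
      · right
        apply Fin.ext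
        have := pt_inj n k v hk1 hs hv (j : ℕ) ((i : ℕ)+1) (by omega) (by omega)
        simpa using this
    · -- vertical segment
      have hxs := xc_step_V v (i : ℕ) hvI
      rw [hxs] at hx1 hx2
      have hxJ : xc v (j : ℕ) = xc v (i : ℕ) := by omega
      obtain ⟨su, sT, sF⟩ := step n k v hk1 hs hv (i : ℕ) hvI
      rcases Nat.lt_or_ge (j : ℕ) ((i : ℕ)+1) with hJI | hJI
      · have hJI' : (j : ℕ) ≤ (i : ℕ) := by omega
        have hcol := xc_col v (j : ℕ) (i : ℕ) hJI' hxJ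
        obtain ⟨cu, cT, cF⟩ := col n k v hk1 hs hv (j : ℕ) (i : ℕ) hJI' hcol
        have hJeq : (j : ℕ) = (i : ℕ) := by
          rcases hu : (yc n k v (j : ℕ)).2 with _ | _
          · have h1 := cF hu
            have h2 := sF (by rw [cu]; exact hu)
            by_contra hne
            have := h1.2 (by omega)
            omega
          · have h1 := cT hu
            have h2 := sT (by rw [cu]; exact hu)
            by_contra hne
            have := h1.2 (by omega)
            omega
        left
        apply Fin.ext
        simpa using hJeq
      · have hcol := xc_col v ((i : ℕ)+1) (j : ℕ) hJI (by omega)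
        obtain ⟨cu, cT, cF⟩ := col n k v hk1 hs hv ((i : ℕ)+1) (j : ℕ) hJI hcol
        have hJeq : (j : ℕ) = (i : ℕ) + 1 := by
          rcases hu : (yc n k v ((i : ℕ)+1)).2 with _ | _
          · have h1 := cF hu
            have h2 := sF (by rw [← su]; exact hu)
            by_contra hne
            have := h1.2 (by omega)
            omega
          · have h1 := cT hu
            have h2 := sT (by rw [← su]; exact hu)
            by_contra hne
            have := h1.2 (by omega)
            omega
        right
        apply Fin.ext
        simpa using hJeq
  · -- condition (iii)
    intro i j hij q r hqi hqj hri hrj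
    simp only [OnSeg, Fin.coe_castSucc, Fin.val_succ] at hqi hqj hri hrj
    have hIJ : (i : ℕ) ≠ (j : ℕ) := fun h => hij (Fin.ext h)
    have hIn : (i : ℕ) < n := i.isLt
    have hJn : (j : ℕ) < n := j.isLt
    rcases hvI : v (i : ℕ) with _ | _ <;> rcases hvJ : v (j : ℕ) with _ | _
    · -- both horizontal
      have hxi := xc_step_H v (i : ℕ) hvI
      have hxj := xc_step_H v (j : ℕ) hvJ
      have hyi : (yc n k v ((i : ℕ)+1)).1 = (yc n k v (i : ℕ)).1 := by
        rw [yc_flat n k v (i : ℕ) hvI]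
      have hyj : (yc n k v ((j : ℕ)+1)).1 = (yc n k v (j : ℕ)).1 := by
        rw [yc_flat n k v (j : ℕ) hvJ]
      rw [hxi, hyi] at hqi hri
      rw [hxj, hyj] at hqj hrj
      have hyIJ : (yc n k v (i : ℕ)).1 = (yc n k v (j : ℕ)).1 := by omega
      have hxIJ : xc v (i : ℕ) ≠ xc v (j : ℕ) := by
        intro h
        exact hIJ (pt_inj n k v hk1 hs hv (i : ℕ) (j : ℕ) h hyIJ)
      have h1 : q.1 = r.1 := by omega
      have h2 : q.2 = r.2 := by omega
      exact Prod.ext h1 h2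
    · -- i horizontal, j vertical
      have hyi : (yc n k v ((i : ℕ)+1)).1 = (yc n k v (i : ℕ)).1 := by
        rw [yc_flat n k v (i : ℕ) hvI]
      have hxj := xc_step_V v (j : ℕ) hvJ
      rw [hyi] at hqi hri
      rw [hxj] at hqj hrj
      have h1 : q.1 = r.1 := by omega
      have h2 : q.2 = r.2 := by omega
      exact Prod.ext h1 h2
    · -- i vertical, j horizontal
      have hyj : (yc n k v ((j : ℕ)+1)).1 = (yc n k v (j : ℕ)).1 := by
        rw [yc_flat n k v (j : ℕ) hvJ]
      have hxi := xc_step_V v (i : ℕ) hvI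
      rw [hyj] at hqj hrj
      rw [hxi] at hqi hri
      have h1 : q.1 = r.1 := by omega
      have h2 : q.2 = r.2 := by omega
      exact Prod.ext h1 h2
    · -- both vertical
      have hxi := xc_step_V v (i : ℕ) hvI
      have hxj := xc_step_V v (j : ℕ) hvJ
      rw [hxi] at hqi hri
      rw [hxj] at hqj hrj
      have hxIJ : xc v (i : ℕ) = xc v (j : ℕ) := by omega
      have key : ∀ A B : ℕ, A < n → B < n → A < B → v A = true → v B = true →
          xc v A = xc v B →
          ∀ w : ℤ × ℤ,
          min (yc n k v A).1 (yc n k v (A+1)).1 ≤ w.2 →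
          w.2 ≤ max (yc n k v A).1 (yc n k v (A+1)).1 →
          min (yc n k v B).1 (yc n k v (B+1)).1 ≤ w.2 →
          w.2 ≤ max (yc n k v B).1 (yc n k v (B+1)).1 →
          w.2 = (yc n k v (A+1)).1 := by
        intro A B hA hB hAB hvA hvB hx w w1 w2 w3 w4
        have hxAB : xc v (A+1) = xc v B := by
          rw [xc_step_V v A hvA]; exact hx
        have hcol := xc_col v (A+1) B (by omega) hxAB
        obtain ⟨cu, cT, cF⟩ := col n k v hk1 hs hv (A+1) B (by omega) hcol
        obtain ⟨suA, sTA, sFA⟩ := step n k v hk1 hs hv A hvA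
        obtain ⟨suB, sTB, sFB⟩ := step n k v hk1 hs hv B hvB
        rcases hu : (yc n k v A).2 with _ | _
        · have e1 := sFA hu
          have e2 := (cF (by rw [suA]; exact hu)).1
          have e3 := sFB (by rw [cu, suA]; exact hu)
          omega
        · have e1 := sTA hu
          have e2 := (cT (by rw [suA]; exact hu)).1
          have e3 := sTB (by rw [cu, suA]; exact hu)
          omega
      rcases lt_trichotomy (i : ℕ) (j : ℕ) with h | h | h
      · have hq := key (i : ℕ) (j : ℕ) hIn hJn h hvI hvJ hxIJ q
          hqi.2.2.1 hqi.2.2.2 hqj.2.2.1 hqj.2.2.2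
        have hr := key (i : ℕ) (j : ℕ) hIn hJn h hvI hvJ hxIJ r
          hri.2.2.1 hri.2.2.2 hrj.2.2.1 hrj.2.2.2
        have h1 : q.1 = r.1 := by omega
        exact Prod.ext h1 (by omega)
      · exact absurd h hIJ
      · have hq := key (j : ℕ) (i : ℕ) hJn hIn h hvJ hvI hxIJ.symm q
          hqj.2.2.1 hqj.2.2.2 hqi.2.2.1 hqi.2.2.2
        have hr := key (j : ℕ) (i : ℕ) hJn hIn h hvJ hvI hxIJ.symm r
          hrj.2.2.1 hrj.2.2.2 hri.2.2.1 hri.2.2.2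
        have h1 : q.1 = r.1 := by omega
        exact Prod.ext h1 (by omega)
  · -- vertical iff
    intro i
    simp only [Fin.coe_castSucc, Fin.val_succ]
    rw [← hvd' i]
    rcases hvI : v (i : ℕ) with _ | _
    · simp only [Bool.false_eq_true, iff_false]
      rw [xc_step_H v (i : ℕ) hvI]
      omega
    · simp only [iff_true]
      exact (xc_step_V v (i : ℕ) hvI).symm
  · -- numRows
    unfold numRows
    apply le_antisymm
    · have hsub : (Finset.univ.image fun i : Fin (n+1) =>
          ((fun j : Fin (n+1) => (xc v (j : ℕ), (yc n k v (j : ℕ)).1)) i).2) ⊆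
          Finset.Icc (0 : ℤ) ((k : ℤ) - 1) := by
        intro y hy
        simp only [Finset.mem_image, Finset.mem_univ, true_and] at hy
        obtain ⟨i, rfl⟩ := hy
        have := bounds n k v hk1 hs hv (i : ℕ)
        simp only [Finset.mem_Icc]
        exact this
      have := Finset.card_le_card hsub
      simpa using this
    · obtain ⟨a, ha, hw⟩ := hk3
      have hcolw : ∀ m, a ≤ m → m < a + (k-1) → v m = true := by
        intro m h1 h2
        have hmn : m < n := by omega
        rw [hvd m hmn]
        have : m = a + (m - a) := by omega
        rw [show (⟨m, hmn⟩ : Fin n) = ⟨a + (m - a), by omega⟩ from by simp [← this]]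
        exact hw (m - a) (by omega)
      have hinj : Set.InjOn (fun t => (yc n k v (a + t)).1) (Finset.range k) := by
        intro t ht t' ht' hEq
        simp only [Finset.coe_range, Set.mem_Iio] at ht ht'
        by_contra hne
        rcases lt_trichotomy t t' with h | h | h
        · have hcol : ∀ m, a + t ≤ m → m < a + t' → v m = true := by
            intro m h1 h2
            exact hcolw m (by omega) (by omega)
          obtain ⟨cu, cT, cF⟩ := col n k v hk1 hs hv (a+t) (a+t') (by omega) hcol
          rcases hu : (yc n k v (a+t)).2 with _ | _
          · have := (cF hu).2 (by omega); simp only at hEq; omega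
          · have := (cT hu).2 (by omega); simp only at hEq; omega
        · exact hne h
        · have hcol : ∀ m, a + t' ≤ m → m < a + t → v m = true := by
            intro m h1 h2
            exact hcolw m (by omega) (by omega)
          obtain ⟨cu, cT, cF⟩ := col n k v hk1 hs hv (a+t') (a+t) (by omega) hcol
          rcases hu : (yc n k v (a+t')).2 with _ | _
          · have := (cF hu).2 (by omega); simp only at hEq; omega
          · have := (cT hu).2 (by omega); simp only at hEq; omega
      have hcard : ((Finset.range k).image fun t => (yc n k v (a + t)).1).card = k := by
        rw [Finset.card_image_of_injOn hinj, Finset.card_range]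
      have hsub : ((Finset.range k).image fun t => (yc n k v (a + t)).1) ⊆
          (Finset.univ.image fun i : Fin (n+1) =>
            ((fun j : Fin (n+1) => (xc v (j : ℕ), (yc n k v (j : ℕ)).1)) i).2) := by
        intro y hy
        simp only [Finset.mem_image, Finset.mem_range] at hy
        obtain ⟨t, ht, rfl⟩ := hy
        simp only [Finset.mem_image, Finset.mem_univ, true_and]
        exact ⟨⟨a + t, by omega⟩, rfl⟩
      calc k = ((Finset.range k).image fun t => (yc n k v (a + t)).1).card := hcard.symm
        _ ≤ _ := Finset.card_le_card hsub
end

section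
/- Let G be a finite simple graph with at least one edge, u_0, u_1, …, u_k a walk in G that traverses every edge of G, and ℓ : V(G) → ℤ an injective labeling. Then the minimum, over all valid row-by-row compactions of the associated path drawing P(G, u, ℓ), of the number of rows of the compaction equals the chromatic number χ(G). -/
private lemma seg_char (g : ℕ → ℤ) (m : ℕ) (z : ℤ × ℤ)
    (hz : OnSeg ((((m + 1) / 2 : ℕ) : ℤ), g (m / 2))
      ((((m + 1 + 1) / 2 : ℕ) : ℤ), g ((m + 1) / 2)) z) :
    (∃ t, m = 2 * t ∧ (t : ℤ) ≤ z.1 ∧ z.1 ≤ (t : ℤ) + 1 ∧ z.2 = g t) ∨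
    (∃ t, m = 2 * t + 1 ∧ z.1 = (t : ℤ) + 1) := by
  obtain ⟨h1, h2, h3, h4⟩ := hz
  dsimp only at h1 h2 h3 h4
  rcases Nat.even_or_odd m with ⟨t, ht⟩ | ⟨t, ht⟩
  · left
    refine ⟨t, by omega, ?_, ?_, ?_⟩
    · rw [show (m+1)/2 = t by omega, show (m+1+1)/2 = t+1 by omega] at h1
      calc (t : ℤ) = min (t : ℤ) ((t+1 : ℕ) : ℤ) := by
            rw [min_eq_left]; exact_mod_cast Nat.le_succ t
        _ ≤ z.1 := h1
    · rw [show (m+1)/2 = t by omega, show (m+1+1)/2 = t+1 by omega] at h2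
      have : z.1 ≤ ((t+1 : ℕ) : ℤ) := by
        rw [show ((t:ℤ)) ⊔ ((t+1:ℕ):ℤ) = ((t+1:ℕ):ℤ) from max_eq_right (by exact_mod_cast Nat.le_succ t)] at h2
        exact h2
      exact_mod_cast this
    · rw [show m/2 = t by omega, show (m+1)/2 = t by omega, min_self] at h3
      rw [show m/2 = t by omega, show (m+1)/2 = t by omega, max_self] at h4
      exact le_antisymm h4 h3
  · right
    refine ⟨t, ht, ?_⟩
    rw [show (m+1)/2 = t+1 by omega, show (m+1+1)/2 = t+1 by omega, min_self] at h1
    rw [show (m+1)/2 = t+1 by omega, show (m+1+1)/2 = t+1 by omega, max_self] at h2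
    have := le_antisymm h2 h1
    rw [this]; push_cast; ring

private lemma valid_aux {k : ℕ} (g : ℕ → ℤ)
    (hg : ∀ a, a < k → g a ≠ g (a + 1)) :
    IsValidDrawing (2 * k + 1)
      (fun j : Fin (2 * k + 1 + 1) => (((((j : ℕ) + 1) / 2 : ℕ) : ℤ), g ((j : ℕ) / 2))) := by
  refine ⟨?_, ?_, ?_, ?_⟩
  · -- orthogonality
    intro i
    simp only [Fin.coe_castSucc, Fin.val_succ, ne_eq, Nat.cast_inj]
    have hi := i.isLt
    rcases Nat.even_or_odd i.val with ⟨t, ht⟩ | ⟨t, ht⟩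
    · exact Or.inr ⟨congrArg g (by omega), by omega⟩
    · refine Or.inl ⟨by omega, fun h => hg t (by omega) ?_⟩
      rwa [show (i.val : ℕ) / 2 = t by omega, show ((i.val : ℕ) + 1) / 2 = t + 1 by omega] at h
  · -- injectivity
    intro a b hab
    have ha := a.isLt; have hb := b.isLt
    simp only [Prod.mk.injEq, Nat.cast_inj] at hab
    obtain ⟨hx, hy⟩ := hab
    by_contra hne
    have hne' : (a : ℕ) ≠ (b : ℕ) := fun h => hne (Fin.ext h)
    rcases (show ((a:ℕ) = (b:ℕ) + 1 ∧ (b:ℕ) % 2 = 1) ∨ ((b:ℕ) = (a:ℕ) + 1 ∧ (a:ℕ) % 2 = 1)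
        by omega) with ⟨h1, h2⟩ | ⟨h1, h2⟩
    · have : g ((b:ℕ)/2) = g ((b:ℕ)/2 + 1) := by
        rw [show (b:ℕ)/2 + 1 = (a:ℕ)/2 by omega]; exact hy.symm
      exact hg _ (by omega) this
    · have : g ((a:ℕ)/2) = g ((a:ℕ)/2 + 1) := by
        rw [show (a:ℕ)/2 + 1 = (b:ℕ)/2 by omega]; exact hy
      exact hg _ (by omega) this
  · -- endpoints on segments
    intro i j hseg
    have hi := i.isLt; have hj := j.isLt
    have hseg' : OnSeg ((((i.val + 1) / 2 : ℕ) : ℤ), g (i.val / 2))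
        ((((i.val + 1 + 1) / 2 : ℕ) : ℤ), g ((i.val + 1) / 2))
        ((((j.val + 1) / 2 : ℕ) : ℤ), g (j.val / 2)) := hseg
    rcases seg_char g i.val _ hseg' with ⟨t, ht, hx1, hx2, hy⟩ | ⟨t, ht, hx⟩
    · -- horizontal segment, y-value g t, x between t and t+1
      dsimp only at hx1 hx2 hy
      have hx1' : t ≤ (j.val + 1) / 2 := by exact_mod_cast hx1
      have hx2' : (j.val + 1) / 2 ≤ t + 1 := by exact_mod_cast hx2
      rcases (show (j:ℕ) = 2*t ∨ (j:ℕ) = 2*t + 1 ∨ (j:ℕ) + 1 = 2*t ∨ (j:ℕ) = 2*t + 2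
          by omega) with h | h | h | h
      · exact Or.inl (Fin.ext (by simp [Fin.coe_castSucc]; omega))
      · exact Or.inr (Fin.ext (by simp [Fin.val_succ]; omega))
      · exfalso
        have hs : g ((j:ℕ)/2) = g ((j:ℕ)/2 + 1) := by
          rw [show (j:ℕ)/2 + 1 = t by omega]; exact hy
        exact hg _ (by omega) hs
      · exfalso
        have hs : g t = g (t + 1) := by
          rw [show t + 1 = (j:ℕ)/2 by omega]; exact hy.symm
        exact hg _ (by omega) hs
    · -- vertical segment, x-value t+1
      dsimp only at hx
      have hx' : (j.val + 1) / 2 = t + 1 := by exact_mod_cast hx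
      rcases (show (j:ℕ) = 2*t + 1 ∨ (j:ℕ) = 2*t + 2 by omega) with h | h
      · exact Or.inl (Fin.ext (by simp [Fin.coe_castSucc]; omega))
      · exact Or.inr (Fin.ext (by simp [Fin.val_succ]; omega))
  · -- segments intersect in at most one point
    intro i j hij z w hiz hjz hiw hjw
    have hi := i.isLt; have hj := j.isLt
    have hij' : i.val ≠ j.val := fun h => hij (Fin.ext h)
    have hiz' : OnSeg ((((i.val + 1) / 2 : ℕ) : ℤ), g (i.val / 2))
        ((((i.val + 1 + 1) / 2 : ℕ) : ℤ), g ((i.val + 1) / 2)) z := hiz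
    have hjz' : OnSeg ((((j.val + 1) / 2 : ℕ) : ℤ), g (j.val / 2))
        ((((j.val + 1 + 1) / 2 : ℕ) : ℤ), g ((j.val + 1) / 2)) z := hjz
    have hiw' : OnSeg ((((i.val + 1) / 2 : ℕ) : ℤ), g (i.val / 2))
        ((((i.val + 1 + 1) / 2 : ℕ) : ℤ), g ((i.val + 1) / 2)) w := hiw
    have hjw' : OnSeg ((((j.val + 1) / 2 : ℕ) : ℤ), g (j.val / 2))
        ((((j.val + 1 + 1) / 2 : ℕ) : ℤ), g ((j.val + 1) / 2)) w := hjw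
    rcases seg_char g i.val z hiz' with ⟨t1, ht1, hz11, hz12, hz13⟩ | ⟨t1, ht1, hz1⟩ <;>
      rcases seg_char g i.val w hiw' with ⟨s1, hs1, hw11, hw12, hw13⟩ | ⟨s1, hs1, hw1⟩ <;>
      rcases seg_char g j.val z hjz' with ⟨t2, ht2, hz21, hz22, hz23⟩ | ⟨t2, ht2, hz2⟩ <;>
      rcases seg_char g j.val w hjw' with ⟨s2, hs2, hw21, hw22, hw23⟩ | ⟨s2, hs2, hw2⟩ <;>
      (try omega)
    · -- i horizontal, j horizontal
      have e1 : s1 = t1 := by omega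
      have e2 : s2 = t2 := by omega
      have e3 : t1 ≠ t2 := by omega
      have hx : z.1 = w.1 := by omega
      have hy : z.2 = w.2 := by rw [hz13, hw13, e1]
      exact Prod.ext_iff.mpr ⟨hx, hy⟩
    · -- i horizontal, j vertical
      have e1 : s1 = t1 := by omega
      have hy : z.2 = w.2 := by rw [hz13, hw13, e1]
      have hx : z.1 = w.1 := by rw [hz2, hw2]; omega
      exact Prod.ext_iff.mpr ⟨hx, hy⟩
    · -- i vertical, j horizontal
      have e2 : s2 = t2 := by omega
      have hy : z.2 = w.2 := by rw [hz23, hw23, e2]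
      have hx : z.1 = w.1 := by rw [hz1, hw1]; omega
      exact Prod.ext_iff.mpr ⟨hx, hy⟩

private lemma lower_bound {V : Type*} [Fintype V]
    (G : SimpleGraph V) (k : ℕ)
    (u : Fin (k + 1) → V)
    (htrav : ∀ e ∈ G.edgeSet, ∃ i : Fin k, e = s(u i.castSucc, u i.succ))
    (ℓ : V → ℤ)
    (q : Fin (2 * k + 1 + 1) → ℤ × ℤ)
    (hq : IsCompaction (2 * k + 1) (pathDrawing k u ℓ) q) :
    G.chromaticNumber ≤ (numRows (2 * k + 1) q : ℕ∞) := by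
  classical
  obtain ⟨⟨_, hinj, _, _⟩, hx, hy⟩ := hq
  set S : Finset ℤ := Finset.univ.image (fun j => (q j).2) with hS
  have hmem : ∀ j, (q j).2 ∈ S := fun j => Finset.mem_image_of_mem _ (Finset.mem_univ j)
  -- y-coordinate of p at even positions
  have hpy2 : ∀ i : Fin (k + 1), (pathDrawing k u ℓ ⟨2 * i.val, by omega⟩).2 = ℓ (u i) := by
    intro i
    show ℓ (u ⟨(2 * i.val) / 2, by omega⟩) = ℓ (u i)
    have h2 : 2 * i.val / 2 = i.val := by omega
    exact congrArg (fun t => ℓ (u t)) (Fin.ext h2)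
  have hpy3 : ∀ i : Fin (k + 1), (h : 2 * i.val + 1 < 2 * k + 1 + 1) →
      (pathDrawing k u ℓ ⟨2 * i.val + 1, h⟩).2 = ℓ (u i) := by
    intro i h
    show ℓ (u ⟨(2 * i.val + 1) / 2, by omega⟩) = ℓ (u i)
    have h2 : (2 * i.val + 1) / 2 = i.val := by omega
    exact congrArg (fun t => ℓ (u t)) (Fin.ext h2)
  have hyw : ∀ i i' : Fin (k + 1), u i = u i' →
      (q ⟨2 * i.val, by omega⟩).2 = (q ⟨2 * i'.val, by omega⟩).2 := by
    intro i i' h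
    apply hy
    rw [hpy2, hpy2, h]
  -- consecutive walk vertices get different q-heights
  have key : ∀ (i : Fin k),
      (q ⟨2 * i.castSucc.val, by omega⟩).2 ≠ (q ⟨2 * i.succ.val, by omega⟩).2 := by
    intro i
    have hi := i.isLt
    have e1 : (q ⟨2 * i.castSucc.val, by omega⟩).2 = (q ⟨2 * i.val + 1, by omega⟩).2 := by
      apply hy
      rw [hpy2 i.castSucc]
      exact (hpy3 i.castSucc (by omega)).symm
    have e3 : (q ⟨2 * i.val + 1, by omega⟩).1 = (q ⟨2 * i.val + 2, by omega⟩).1 := by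
      rw [hx, hx]
      show (((2 * i.val + 1 + 1) / 2 : ℕ) : ℤ) = ((2 * i.val + 2 + 1) / 2 : ℕ)
      norm_cast
      omega
    have hidx : (⟨2 * i.succ.val, by omega⟩ : Fin (2 * k + 1 + 1)) = ⟨2 * i.val + 2, by omega⟩ := by
      apply Fin.ext
      show 2 * i.succ.val = 2 * i.val + 2
      simp only [Fin.val_succ]
      omega
    intro hcon
    have e4 : q ⟨2 * i.val + 1, by omega⟩ = q ⟨2 * i.val + 2, by omega⟩ := by
      apply Prod.ext_iff.mpr
      exact ⟨e3, e1.symm.trans (hcon.trans (congrArg (fun t => (q t).2) hidx))⟩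
    have h5 := hinj e4
    rw [Fin.mk.injEq] at h5
    omega
  have hcol : G.Colorable S.card := by
    have C : G.Coloring {z : ℤ // z ∈ S} := SimpleGraph.Coloring.mk
      (fun v => if h : ∃ i : Fin (k + 1), u i = v
        then ⟨(q ⟨2 * (h.choose).val, by omega⟩).2, hmem _⟩
        else ⟨(q 0).2, hmem _⟩)
      (by
        intro v w hadj
        obtain ⟨i, hi⟩ := htrav s(v, w) (by rwa [SimpleGraph.mem_edgeSet])
        rw [Sym2.eq_iff] at hi
        have hv : ∃ i' : Fin (k + 1), u i' = v := by
          rcases hi with ⟨h1, _⟩ | ⟨h1, _⟩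
          exacts [⟨i.castSucc, h1.symm⟩, ⟨i.succ, h1.symm⟩]
        have hw : ∃ i' : Fin (k + 1), u i' = w := by
          rcases hi with ⟨_, h2⟩ | ⟨_, h2⟩
          exacts [⟨i.succ, h2.symm⟩, ⟨i.castSucc, h2.symm⟩]
        simp only [dif_pos hv, dif_pos hw, ne_eq, Subtype.mk.injEq]
        rcases hi with ⟨h1, h2⟩ | ⟨h1, h2⟩
        · have hv' : u hv.choose = u i.castSucc := hv.choose_spec.trans h1
          have hw' : u hw.choose = u i.succ := hw.choose_spec.trans h2
          intro hcon
          exact key i ((hyw i.castSucc hv.choose hv'.symm).trans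
            (hcon.trans (hyw hw.choose i.succ hw')))
        · have hv' : u hv.choose = u i.succ := hv.choose_spec.trans h1
          have hw' : u hw.choose = u i.castSucc := hw.choose_spec.trans h2
          intro hcon
          exact key i ((hyw i.castSucc hw.choose hw'.symm).trans
            (hcon.symm.trans (hyw hv.choose i.succ hv'))))
    have := C.colorable
    rwa [Fintype.card_coe] at this
  exact hcol.chromaticNumber_le

/-- If `G` has at least one edge, the walk `u_0, …, u_k` traverses every edge of `G`, and
`ℓ` is an injective labeling, then the minimum number of rows over all valid row-by-row
compactions of the path drawing `P(G, u, ℓ)` equals the chromatic number `χ(G)`. -/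
theorem min_compaction_rows_eq_chromaticNumber {V : Type*} [Fintype V]
    (G : SimpleGraph V) (k : ℕ)
    (u : Fin (k + 1) → V) (hu : ∀ i : Fin k, G.Adj (u i.castSucc) (u i.succ))
    (htrav : ∀ e ∈ G.edgeSet, ∃ i : Fin k, e = s(u i.castSucc, u i.succ))
    (hne : G.edgeSet.Nonempty)
    (ℓ : V → ℤ) (hℓ : Function.Injective ℓ) :
    IsLeast {r : ℕ∞ | ∃ q : Fin (2 * k + 1 + 1) → ℤ × ℤ,
        IsCompaction (2 * k + 1) (pathDrawing k u ℓ) q ∧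
        (numRows (2 * k + 1) q : ℕ∞) = r}
      G.chromaticNumber := by
  classical
  have hfin : G.chromaticNumber ≠ ⊤ := by
    have h := G.colorable_of_fintype.chromaticNumber_le
    intro hc
    rw [hc] at h
    exact (ENat.coe_lt_top (Fintype.card V)).not_ge h
  set n := G.chromaticNumber.toNat with hn
  have hχ : (n : ℕ∞) = G.chromaticNumber := ENat.coe_toNat hfin
  obtain ⟨c⟩ := G.colorable_chromaticNumber_of_fintype
  set g : ℕ → ℤ := fun a => ((c (u ⟨min a k, by omega⟩) : ℕ) : ℤ) with hgdef
  have hgval : ∀ (m : ℕ) (h : m < k + 1), g m = ((c (u ⟨m, h⟩) : ℕ) : ℤ) := by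
    intro m h
    show ((c (u ⟨min m k, by omega⟩) : ℕ) : ℤ) = _
    exact congrArg (fun v => ((c v : ℕ) : ℤ))
      (congrArg u (Fin.ext (show min m k = m by omega)))
  have hg : ∀ a, a < k → g a ≠ g (a + 1) := by
    intro a ha hcon
    rw [hgval a (by omega), hgval (a + 1) (by omega)] at hcon
    have hcon2 : (c (u ⟨a, by omega⟩) : ℕ) = (c (u ⟨a + 1, by omega⟩) : ℕ) := by
      exact_mod_cast hcon
    have hcon3 : c (u ⟨a, by omega⟩) = c (u ⟨a + 1, by omega⟩) := Fin.val_injective hcon2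
    exact c.valid (hu ⟨a, ha⟩) hcon3
  let qf : Fin (2 * k + 1 + 1) → ℤ × ℤ :=
    fun j => (((((j : ℕ) + 1) / 2 : ℕ) : ℤ), g ((j : ℕ) / 2))
  have hcomp : IsCompaction (2 * k + 1) (pathDrawing k u ℓ) qf := by
    refine ⟨valid_aux g hg, fun j => rfl, ?_⟩
    intro a b h
    have ha := a.isLt; have hb := b.isLt
    have h' : ℓ (u ⟨(a : ℕ) / 2, by omega⟩) = ℓ (u ⟨(b : ℕ) / 2, by omega⟩) := h
    have h2 : u ⟨(a : ℕ) / 2, by omega⟩ = u ⟨(b : ℕ) / 2, by omega⟩ := hℓ h'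
    show g ((a : ℕ) / 2) = g ((b : ℕ) / 2)
    rw [hgval _ (by omega), hgval _ (by omega)]
    exact congrArg (fun v => ((c v : ℕ) : ℤ)) h2
  have hge : G.chromaticNumber ≤ (numRows (2 * k + 1) qf : ℕ∞) :=
    lower_bound G k u htrav ℓ qf hcomp
  have hle : numRows (2 * k + 1) qf ≤ n := by
    have hsub : (Finset.univ.image fun j : Fin (2 * k + 1 + 1) => (qf j).2) ⊆
        Finset.univ.image (fun m : Fin n => ((m : ℕ) : ℤ)) := by
      intro z hz
      simp only [Finset.mem_image] at hz ⊢
      obtain ⟨j, _, rfl⟩ := hz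
      exact ⟨c (u ⟨min ((j : ℕ) / 2) k, by omega⟩), Finset.mem_univ _, rfl⟩
    calc numRows (2 * k + 1) qf ≤ _ := Finset.card_le_card hsub
      _ ≤ Fintype.card (Fin n) := Finset.card_image_le.trans (by simp)
      _ = n := Fintype.card_fin n
  have hge' : n ≤ numRows (2 * k + 1) qf := by
    have h2 : (n : ℕ∞) ≤ (numRows (2 * k + 1) qf : ℕ∞) := by rw [hχ]; exact hge
    exact_mod_cast h2
  have heq : numRows (2 * k + 1) qf = n := le_antisymm hle (by exact_mod_cast hge')
  constructor
  · exact ⟨qf, hcomp, by rw [heq, hχ]⟩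
  · rintro r ⟨q', hq', rfl⟩
    exact lower_bound G k u htrav ℓ q' hq'
end
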